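/- arXiv:1101.1016 — 8 statements merged into one kernel-verified Lean document; each statement's English description precedes it below -/
import Mathlib

section
/- Let q ≥ 1, r > 0 and let g : (0,∞) → [0,∞) be measurable. Then ( ∫_0^∞ ( ∫_0^t g(u) du )^q t^{−r−1} dt )^{1/q} ≤ (q/r) ( ∫_0^∞ ( u·g(u) )^q u^{−r−1} du )^{1/q}. -/
open MeasureTheory Set
open scoped ENNReal

private lemma lint_Ioc_rpow {a t : ℝ} (ha : -1 < a) (ht : 0 ≤ t) :
    ∫⁻ u in Ioc (0 : ℝ) t, ENNReal.ofReal (u ^ a)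
      = ENNReal.ofReal (t ^ (a + 1) / (a + 1)) := by
  rw [← ofReal_integral_eq_lintegral_ofReal ((intervalIntegral.intervalIntegrable_rpow' ha).1)
      (by filter_upwards [ae_restrict_mem measurableSet_Ioc] with u hu using
        Real.rpow_nonneg hu.1.le a)]
  rw [← intervalIntegral.integral_of_le ht, integral_rpow (Or.inl ha),
    Real.zero_rpow (by linarith : a + 1 ≠ 0), sub_zero]

private lemma lint_Ioi_rpow {b u : ℝ} (hb : b < -1) (hu : 0 < u) :
    ∫⁻ t in Ioi u, ENNReal.ofReal (t ^ b)
      = ENNReal.ofReal (u ^ (b + 1) / (-(b + 1))) := by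
  rw [← ofReal_integral_eq_lintegral_ofReal (integrableOn_Ioi_rpow_of_lt hb hu)
      (by filter_upwards [ae_restrict_mem measurableSet_Ioi] with x hx using
        Real.rpow_nonneg (le_of_lt (hu.trans hx)) b)]
  rw [integral_Ioi_rpow_of_lt hb hu, div_neg, neg_div]

private lemma fubini_key {f : ℝ → ℝ≥0∞} (hf : Measurable f) {b : ℝ} (hb : b < -1) :
    ∫⁻ t in Ioi (0 : ℝ), (∫⁻ u in Ioc (0 : ℝ) t, f u) * ENNReal.ofReal (t ^ b)
      = ∫⁻ u in Ioi (0 : ℝ), f u * ENNReal.ofReal (u ^ (b + 1) / (-(b + 1))) := by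
  set F : ℝ × ℝ → ℝ≥0∞ :=
    fun p => {p : ℝ × ℝ | p.2 ≤ p.1}.indicator
      (fun p => f p.2 * ENNReal.ofReal (p.1 ^ b)) p with hF
  have hmF : Measurable F := by
    apply Measurable.indicator
    · exact (hf.comp measurable_snd).mul
        (ENNReal.measurable_ofReal.comp (by measurability))
    · exact measurableSet_le measurable_snd measurable_fst
  have hmrb : Measurable fun t : ℝ => ENNReal.ofReal (t ^ b) :=
    ENNReal.measurable_ofReal.comp (by measurability)
  have h1 : ∫⁻ t in Ioi (0 : ℝ), (∫⁻ u in Ioc (0 : ℝ) t, f u) * ENNReal.ofReal (t ^ b)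
      = ∫⁻ t in Ioi (0 : ℝ), ∫⁻ u in Ioi (0 : ℝ), F (t, u) := by
    apply setLIntegral_congr_fun measurableSet_Ioi (fun t ht => ?_)
    have e1 : ∫⁻ u in Ioi (0 : ℝ), F (t, u)
        = ∫⁻ u in Ioi (0 : ℝ), (Iic t).indicator (fun u => f u * ENNReal.ofReal (t ^ b)) u := by
      apply setLIntegral_congr_fun measurableSet_Ioi (fun u hu => ?_)
      by_cases h : u ≤ t <;> simp [hF, Set.indicator, h]
    rw [e1, lintegral_indicator measurableSet_Iic, Measure.restrict_restrict measurableSet_Iic,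
      inter_comm, Ioi_inter_Iic, lintegral_mul_const _ hf]
  have h2 : ∀ u ∈ Ioi (0 : ℝ),
      (∫⁻ t in Ioi (0 : ℝ), F (t, u))
        = f u * ENNReal.ofReal (u ^ (b + 1) / (-(b + 1))) := by
    intro u hu
    have e1 : ∫⁻ t in Ioi (0 : ℝ), F (t, u)
        = ∫⁻ t in Ioi (0 : ℝ), (Ici u).indicator (fun t => f u * ENNReal.ofReal (t ^ b)) t := by
      apply setLIntegral_congr_fun measurableSet_Ioi (fun t ht => ?_)
      by_cases h : u ≤ t <;> simp [hF, Set.indicator, h]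
    have hss : Ici u ∩ Ioi (0 : ℝ) = Ici u :=
      inter_eq_left.2 fun x hx => (lt_of_lt_of_le hu hx : (0 : ℝ) < x)
    rw [e1, lintegral_indicator measurableSet_Ici, Measure.restrict_restrict measurableSet_Ici,
      hss, ← Measure.restrict_congr_set Ioi_ae_eq_Ici,
      lintegral_const_mul _ hmrb, lint_Ioi_rpow hb hu]
  have hmF2 : AEMeasurable (Function.uncurry fun t u : ℝ => F (t, u))
      ((volume.restrict (Ioi (0 : ℝ))).prod (volume.restrict (Ioi (0 : ℝ)))) :=
    (hmF.comp (measurable_fst.prodMk measurable_snd)).aemeasurable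
  rw [h1, lintegral_lintegral_swap hmF2]
  exact setLIntegral_congr_fun measurableSet_Ioi h2


set_option maxHeartbeats 1000000 in
/-- Hardy's inequality (first form):
`(∫₀^∞ (∫₀^t g)^q t^{-r-1} dt)^{1/q} ≤ (q/r) (∫₀^∞ (u g(u))^q u^{-r-1} du)^{1/q}`. -/
theorem hardy_inequality_first
    (q r : ℝ) (hq : 1 ≤ q) (hr : 0 < r) (g : ℝ → ℝ)
    (hg : Measurable g) (hg0 : ∀ u, 0 < u → 0 ≤ g u) :
    (∫⁻ t in Ioi (0 : ℝ),
        (∫⁻ u in Ioc (0 : ℝ) t, ENNReal.ofReal (g u)) ^ q *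
          ENNReal.ofReal (t ^ (-r - 1))) ^ (1 / q)
      ≤ ENNReal.ofReal (q / r) *
        (∫⁻ u in Ioi (0 : ℝ),
          ENNReal.ofReal ((u * g u) ^ q * u ^ (-r - 1))) ^ (1 / q) := by
  have hGm : Measurable fun u => ENNReal.ofReal (g u) := ENNReal.measurable_ofReal.comp hg
  rcases eq_or_lt_of_le hq with hq1 | hq1
  · -- q = 1
    subst hq1
    rw [show (1 : ℝ) / 1 = 1 by norm_num]
    simp only [ENNReal.rpow_one]
    rw [fubini_key hGm (show -r - 1 < -1 by linarith),
      ← lintegral_const_mul' _ _ ENNReal.ofReal_ne_top]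
    apply le_of_eq
    apply setLIntegral_congr_fun measurableSet_Ioi (fun u hu => ?_)
    have hu : (0 : ℝ) < u := hu
    rw [show -r - 1 + 1 = -r by ring, neg_neg, Real.rpow_one,
      ← ENNReal.ofReal_mul (hg0 u hu), ← ENNReal.ofReal_mul (by positivity : (0 : ℝ) ≤ 1 / r)]
    congr 1
    have h1 : u * u ^ (-r - 1) = u ^ (-r) := by
      nth_rewrite 1 [← Real.rpow_one u]
      rw [← Real.rpow_add hu]
      norm_num
    rw [← h1]; ring
  · -- 1 < q
    have hq0 : (0 : ℝ) < q := lt_trans one_pos hq1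
    have hqne : q ≠ 0 := ne_of_gt hq0
    have hq1' : q - 1 ≠ 0 := sub_ne_zero.2 (ne_of_gt hq1)
    set θ : ℝ := r / q with hθ
    have hθ0 : 0 < θ := div_pos hr hq0
    set c : ℝ := (1 - θ) * (q - 1) / q with hc
    set q' : ℝ := q / (q - 1) with hq'
    have hconj : q.HolderConjugate q' := by
      rw [hq']; exact (Real.holderConjugate_iff_eq_conjExponent hq1).2 rfl
    have hbeq : θ * (q - 1) - r - 1 = -θ - 1 := by rw [hθ]; field_simp; ring
    -- pointwise Hölder estimate
    have hH : ∀ t : ℝ, 0 < t →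
        (∫⁻ u in Ioc (0 : ℝ) t, ENNReal.ofReal (g u))
          ≤ (∫⁻ u in Ioc (0 : ℝ) t,
                ENNReal.ofReal (g u) ^ q * ENNReal.ofReal (u ^ (c * q))) ^ (1 / q) *
              ENNReal.ofReal (t ^ θ / θ) ^ (1 / q') := by
      intro t ht
      have h1 : (∫⁻ u in Ioc (0 : ℝ) t, ENNReal.ofReal (g u))
          = ∫⁻ u in Ioc (0 : ℝ) t,
              ((fun u => ENNReal.ofReal (g u) * ENNReal.ofReal (u ^ c)) *
                fun u => ENNReal.ofReal (u ^ (-c))) u := by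
        apply setLIntegral_congr_fun measurableSet_Ioc (fun u hu => ?_)
        simp only [Pi.mul_apply]
        rw [mul_assoc, ← ENNReal.ofReal_mul (Real.rpow_nonneg hu.1.le c),
          ← Real.rpow_add hu.1, add_neg_cancel, Real.rpow_zero, ENNReal.ofReal_one, mul_one]
      have hm1 : AEMeasurable (fun u => ENNReal.ofReal (g u) * ENNReal.ofReal (u ^ c))
          (volume.restrict (Ioc (0 : ℝ) t)) :=
        (hGm.mul (ENNReal.measurable_ofReal.comp (by measurability))).aemeasurable
      have hm2 : AEMeasurable (fun u : ℝ => ENNReal.ofReal (u ^ (-c)))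
          (volume.restrict (Ioc (0 : ℝ) t)) :=
        (ENNReal.measurable_ofReal.comp (by measurability)).aemeasurable
      rw [h1]
      refine (ENNReal.lintegral_mul_le_Lp_mul_Lq _ hconj hm1 hm2).trans (le_of_eq ?_)
      congr 1
      · congr 1
        apply setLIntegral_congr_fun measurableSet_Ioc (fun u hu => ?_)
        rw [ENNReal.mul_rpow_of_nonneg _ _ hq0.le,
          ENNReal.ofReal_rpow_of_pos (Real.rpow_pos_of_pos hu.1 c), ← Real.rpow_mul hu.1.le]
      · congr 1
        have e2 : ∫⁻ u in Ioc (0 : ℝ) t, ENNReal.ofReal (u ^ (-c)) ^ q'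
            = ∫⁻ u in Ioc (0 : ℝ) t, ENNReal.ofReal (u ^ (-c * q')) := by
          apply setLIntegral_congr_fun measurableSet_Ioc (fun u hu => ?_)
          rw [ENNReal.ofReal_rpow_of_pos (Real.rpow_pos_of_pos hu.1 _), ← Real.rpow_mul hu.1.le]
        have hcq' : -c * q' = θ - 1 := by
          rw [hc, hq']; field_simp; ring
        rw [e2, hcq', lint_Ioc_rpow (by linarith) ht.le, show θ - 1 + 1 = θ by ring]
    -- pointwise estimate after raising to the q-th power
    have hpt : ∀ t ∈ Ioi (0 : ℝ),
        (∫⁻ u in Ioc (0 : ℝ) t, ENNReal.ofReal (g u)) ^ q * ENNReal.ofReal (t ^ (-r - 1))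
          ≤ ENNReal.ofReal (θ⁻¹ ^ (q - 1)) *
            ((∫⁻ u in Ioc (0 : ℝ) t,
                ENNReal.ofReal (g u) ^ q * ENNReal.ofReal (u ^ (c * q))) *
              ENNReal.ofReal (t ^ (θ * (q - 1) - r - 1))) := by
      intro t ht
      have ht' : (0 : ℝ) < t := ht
      have h2 := ENNReal.rpow_le_rpow (hH t ht') hq0.le
      rw [ENNReal.mul_rpow_of_nonneg _ _ hq0.le, ← ENNReal.rpow_mul, ← ENNReal.rpow_mul,
        one_div_mul_cancel hqne, ENNReal.rpow_one,
        show 1 / q' * q = q - 1 by rw [hq', one_div_div, div_mul_cancel₀ _ hqne]] at h2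
      calc (∫⁻ u in Ioc (0 : ℝ) t, ENNReal.ofReal (g u)) ^ q * ENNReal.ofReal (t ^ (-r - 1))
          ≤ ((∫⁻ u in Ioc (0 : ℝ) t,
                ENNReal.ofReal (g u) ^ q * ENNReal.ofReal (u ^ (c * q))) *
              ENNReal.ofReal (t ^ θ / θ) ^ (q - 1)) * ENNReal.ofReal (t ^ (-r - 1)) :=
            mul_le_mul_left h2 _
        _ = ENNReal.ofReal (θ⁻¹ ^ (q - 1)) *
            ((∫⁻ u in Ioc (0 : ℝ) t,
                ENNReal.ofReal (g u) ^ q * ENNReal.ofReal (u ^ (c * q))) *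
              ENNReal.ofReal (t ^ (θ * (q - 1) - r - 1))) := by
            rw [ENNReal.ofReal_rpow_of_nonneg
                (div_nonneg (Real.rpow_nonneg ht'.le θ) hθ0.le)
                (by linarith : (0 : ℝ) ≤ q - 1),
              mul_assoc, ← ENNReal.ofReal_mul
                (Real.rpow_nonneg (div_nonneg (Real.rpow_nonneg ht'.le θ) hθ0.le) _)]
            have ereal : (t ^ θ / θ) ^ (q - 1) * t ^ (-r - 1)
                = θ⁻¹ ^ (q - 1) * t ^ (θ * (q - 1) - r - 1) := by
              rw [div_eq_mul_inv,
                Real.mul_rpow (Real.rpow_nonneg ht'.le θ) (inv_nonneg.2 hθ0.le),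
                ← Real.rpow_mul ht'.le,
                mul_comm ((t : ℝ) ^ (θ * (q - 1))) (θ⁻¹ ^ (q - 1)), mul_assoc,
                ← Real.rpow_add ht']
              congr 2
              ring
            rw [ereal, ENNReal.ofReal_mul (Real.rpow_nonneg (inv_nonneg.2 hθ0.le) _)]
            ring
    -- measurability of the weighted integrand
    have Hm : Measurable fun u : ℝ =>
        ENNReal.ofReal (g u) ^ q * ENNReal.ofReal (u ^ (c * q)) :=
      (hGm.pow measurable_const).mul
        (ENNReal.measurable_ofReal.comp (measurable_id.pow measurable_const))
    -- integrate the pointwise bound and apply Fubini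
    have hA : (∫⁻ t in Ioi (0 : ℝ),
          (∫⁻ u in Ioc (0 : ℝ) t, ENNReal.ofReal (g u)) ^ q * ENNReal.ofReal (t ^ (-r - 1)))
        ≤ ENNReal.ofReal (θ⁻¹ ^ (q - 1) * θ⁻¹) *
          ∫⁻ u in Ioi (0 : ℝ), ENNReal.ofReal ((u * g u) ^ q * u ^ (-r - 1)) := by
      calc (∫⁻ t in Ioi (0 : ℝ),
              (∫⁻ u in Ioc (0 : ℝ) t, ENNReal.ofReal (g u)) ^ q *
                ENNReal.ofReal (t ^ (-r - 1)))
          ≤ ∫⁻ t in Ioi (0 : ℝ), ENNReal.ofReal (θ⁻¹ ^ (q - 1)) *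
              ((∫⁻ u in Ioc (0 : ℝ) t,
                  ENNReal.ofReal (g u) ^ q * ENNReal.ofReal (u ^ (c * q))) *
                ENNReal.ofReal (t ^ (θ * (q - 1) - r - 1))) :=
            lintegral_mono_ae (by
              filter_upwards [ae_restrict_mem measurableSet_Ioi] with t ht using hpt t ht)
        _ = ENNReal.ofReal (θ⁻¹ ^ (q - 1)) *
            ∫⁻ t in Ioi (0 : ℝ),
              (∫⁻ u in Ioc (0 : ℝ) t,
                  ENNReal.ofReal (g u) ^ q * ENNReal.ofReal (u ^ (c * q))) *
                ENNReal.ofReal (t ^ (θ * (q - 1) - r - 1)) :=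
            lintegral_const_mul' _ _ ENNReal.ofReal_ne_top
        _ = ENNReal.ofReal (θ⁻¹ ^ (q - 1)) *
            ∫⁻ u in Ioi (0 : ℝ),
              (ENNReal.ofReal (g u) ^ q * ENNReal.ofReal (u ^ (c * q))) *
                ENNReal.ofReal (u ^ (θ * (q - 1) - r - 1 + 1) /
                  (-(θ * (q - 1) - r - 1 + 1))) := by
            rw [fubini_key Hm (show θ * (q - 1) - r - 1 < -1 by rw [hbeq]; linarith)]
        _ = ENNReal.ofReal (θ⁻¹ ^ (q - 1)) * (ENNReal.ofReal θ⁻¹ *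
            ∫⁻ u in Ioi (0 : ℝ), ENNReal.ofReal ((u * g u) ^ q * u ^ (-r - 1))) := by
            congr 1
            rw [← lintegral_const_mul' _ _ ENNReal.ofReal_ne_top]
            apply setLIntegral_congr_fun measurableSet_Ioi (fun u hu => ?_)
            have hu' : (0 : ℝ) < u := hu
            have hbu : θ * (q - 1) - r - 1 + 1 = -θ := by rw [hθ]; field_simp; ring
            rw [hbu, neg_neg,
              ENNReal.ofReal_rpow_of_nonneg (hg0 u hu') hq0.le,
              ← ENNReal.ofReal_mul (Real.rpow_nonneg (hg0 u hu') q),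
              ← ENNReal.ofReal_mul
                (mul_nonneg (Real.rpow_nonneg (hg0 u hu') q) (Real.rpow_nonneg hu'.le _)),
              ← ENNReal.ofReal_mul (inv_nonneg.2 hθ0.le)]
            congr 1
            have e1 : u ^ (c * q) * u ^ (-θ) = u ^ (q - r - 1) := by
              rw [← Real.rpow_add hu']
              congr 1
              rw [hc, hθ]; field_simp; ring
            have e2 : (u * g u) ^ q = u ^ q * g u ^ q := Real.mul_rpow hu'.le (hg0 u hu')
            have e3 : u ^ q * u ^ (-r - 1) = u ^ (q - r - 1) := by
              rw [← Real.rpow_add hu']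
              congr 1
              ring
            calc g u ^ q * u ^ (c * q) * (u ^ (-θ) / θ)
                = g u ^ q * (u ^ (c * q) * u ^ (-θ)) * θ⁻¹ := by
                  rw [div_eq_mul_inv]; ring
              _ = g u ^ q * u ^ (q - r - 1) * θ⁻¹ := by rw [e1]
              _ = θ⁻¹ * ((u * g u) ^ q * u ^ (-r - 1)) := by rw [e2, ← e3]; ring
        _ = ENNReal.ofReal (θ⁻¹ ^ (q - 1) * θ⁻¹) *
            ∫⁻ u in Ioi (0 : ℝ), ENNReal.ofReal ((u * g u) ^ q * u ^ (-r - 1)) := by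
            rw [ENNReal.ofReal_mul (Real.rpow_nonneg (inv_nonneg.2 hθ0.le) _)]
            ring
    -- conclude
    calc (∫⁻ t in Ioi (0 : ℝ),
            (∫⁻ u in Ioc (0 : ℝ) t, ENNReal.ofReal (g u)) ^ q *
              ENNReal.ofReal (t ^ (-r - 1))) ^ (1 / q)
        ≤ (ENNReal.ofReal (θ⁻¹ ^ (q - 1) * θ⁻¹) *
            ∫⁻ u in Ioi (0 : ℝ),
              ENNReal.ofReal ((u * g u) ^ q * u ^ (-r - 1))) ^ (1 / q) :=
          ENNReal.rpow_le_rpow hA (by positivity)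
      _ = ENNReal.ofReal (q / r) *
          (∫⁻ u in Ioi (0 : ℝ),
            ENNReal.ofReal ((u * g u) ^ q * u ^ (-r - 1))) ^ (1 / q) := by
          have h1 : θ⁻¹ ^ (q - 1) * θ⁻¹ = θ⁻¹ ^ q := by
            nth_rewrite 2 [← Real.rpow_one θ⁻¹]
            rw [← Real.rpow_add (inv_pos.2 hθ0)]
            congr 1
            ring
          rw [h1, ENNReal.mul_rpow_of_nonneg _ _ (by positivity : (0 : ℝ) ≤ 1 / q),
            ENNReal.ofReal_rpow_of_nonneg (Real.rpow_nonneg (inv_nonneg.2 hθ0.le) q)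
              (by positivity),
            ← Real.rpow_mul (inv_nonneg.2 hθ0.le), mul_one_div_cancel hqne, Real.rpow_one,
            hθ, inv_div]
end

section
/- Let q ≥ 1, r > 0 and let g : (0,∞) → [0,∞) be measurable. Then ( ∫_0^∞ ( ∫_t^∞ g(u) du )^q t^{r−1} dt )^{1/q} ≤ (q/r) ( ∫_0^∞ ( u·g(u) )^q u^{r−1} du )^{1/q}. -/
open MeasureTheory Set
open scoped ENNReal

private lemma lintegral_Ioi_rpow' {c s : ℝ} (hc : 0 < c) (hs : s < -1) :
    ∫⁻ u in Ioi c, ENNReal.ofReal (u ^ s) = ENNReal.ofReal (c ^ (s + 1) / (-(s + 1))) := by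
  rw [← ofReal_integral_eq_lintegral_ofReal (integrableOn_Ioi_rpow_of_lt hs hc)
      (ae_restrict_of_forall_mem measurableSet_Ioi fun u hu =>
        Real.rpow_nonneg (hc.trans hu).le _),
    integral_Ioi_rpow_of_lt hs hc]
  congr 1
  rw [div_neg, neg_div]

private lemma lintegral_Ioo_rpow' {u s : ℝ} (hu : 0 < u) (hs : -1 < s) :
    ∫⁻ t in Ioo 0 u, ENNReal.ofReal (t ^ s) = ENNReal.ofReal (u ^ (s + 1) / (s + 1)) := by
  rw [Measure.restrict_congr_set Ioo_ae_eq_Ioc,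
    ← ofReal_integral_eq_lintegral_ofReal ((intervalIntegral.intervalIntegrable_rpow' hs).1)
      (ae_restrict_of_forall_mem measurableSet_Ioc fun t ht =>
        Real.rpow_nonneg ht.1.le _),
    ← intervalIntegral.integral_of_le hu.le, integral_rpow (Or.inl hs)]
  congr 1
  rw [Real.zero_rpow (by linarith), sub_zero]

private lemma hardy_holder_step (q r : ℝ) (hq : 1 ≤ q) (hr : 0 < r) (G : ℝ → ℝ≥0∞)
    (hG : Measurable G) {t : ℝ} (ht : 0 < t) :
    (∫⁻ u in Ioi t, G u) ^ q ≤
      (∫⁻ u in Ioi t, G u ^ q * ENNReal.ofReal (u ^ ((q - 1) * (q + r) / q))) *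
        ENNReal.ofReal (q / r * t ^ (-(r / q))) ^ (q - 1) := by
  have hq0 : (0:ℝ) < q := lt_of_lt_of_le one_pos hq
  rcases eq_or_lt_of_le hq with hq1 | hq1
  · subst hq1
    simp only [sub_self, ENNReal.rpow_one, zero_mul, zero_div, ENNReal.rpow_zero, mul_one]
    refine le_of_eq (setLIntegral_congr_fun measurableSet_Ioi (fun u hu => ?_))
    rw [Real.rpow_zero, ENNReal.ofReal_one, mul_one]
  · set A : ℝ := (q - 1) * (q + r) / q with hA
    set p : ℝ := q / (q - 1) with hp
    have hq1' : (0:ℝ) < q - 1 := by linarith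
    have hp0 : (0:ℝ) < p := div_pos hq0 hq1'
    have hpq : q.HolderConjugate p := Real.HolderConjugate.conjExponent hq1
    set f : ℝ → ℝ≥0∞ := fun u => G u * ENNReal.ofReal (u ^ (A / q)) with hf
    set h : ℝ → ℝ≥0∞ := fun u => ENNReal.ofReal (u ^ (-(A / q))) with hh
    have hfm : Measurable f := by rw [hf]; fun_prop
    have hhm : Measurable h := by rw [hh]; fun_prop
    have step1 : ∫⁻ u in Ioi t, G u = ∫⁻ u in Ioi t, (f * h) u := by
      refine setLIntegral_congr_fun measurableSet_Ioi (fun u hu => ?_)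
      have hu0 : (0:ℝ) < u := ht.trans hu
      simp only [f, h, Pi.mul_apply, mul_assoc, ← ENNReal.ofReal_mul
        (Real.rpow_nonneg hu0.le _), ← Real.rpow_add hu0]
      rw [add_neg_cancel, Real.rpow_zero, ENNReal.ofReal_one, mul_one]
    have holder := ENNReal.lintegral_mul_le_Lp_mul_Lq (volume.restrict (Ioi t)) hpq
      hfm.aemeasurable hhm.aemeasurable
    have hfq : ∫⁻ u in Ioi t, f u ^ q =
        ∫⁻ u in Ioi t, G u ^ q * ENNReal.ofReal (u ^ A) := by
      refine setLIntegral_congr_fun measurableSet_Ioi (fun u hu => ?_)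
      have hu0 : (0:ℝ) < u := ht.trans hu
      rw [hf, ENNReal.mul_rpow_of_nonneg _ _ hq0.le,
        ENNReal.ofReal_rpow_of_nonneg (Real.rpow_nonneg hu0.le _) hq0.le,
        ← Real.rpow_mul hu0.le, div_mul_cancel₀ _ hq0.ne']
    have hhp : ∫⁻ u in Ioi t, h u ^ p = ENNReal.ofReal (q / r * t ^ (-(r / q))) := by
      have key : ∀ u ∈ Ioi t, h u ^ p = ENNReal.ofReal (u ^ (-((q + r) / q))) := by
        intro u hu
        have hu0 : (0:ℝ) < u := ht.trans hu
        rw [hh, ENNReal.ofReal_rpow_of_nonneg (Real.rpow_nonneg hu0.le _) hp0.le,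
          ← Real.rpow_mul hu0.le]
        congr 2
        rw [hA, hp]
        field_simp
      rw [setLIntegral_congr_fun measurableSet_Ioi key,
        lintegral_Ioi_rpow' ht (by rw [neg_lt, neg_neg, lt_div_iff₀ hq0]; linarith)]
      have e1 : -((q + r) / q) + 1 = -(r / q) := by field_simp; ring
      rw [e1, neg_neg, div_eq_mul_inv, inv_div, mul_comm]
    calc (∫⁻ u in Ioi t, G u) ^ q
        ≤ ((∫⁻ u in Ioi t, f u ^ q) ^ (1/q) * (∫⁻ u in Ioi t, h u ^ p) ^ (1/p)) ^ q := by
          rw [step1]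
          exact ENNReal.rpow_le_rpow holder hq0.le
      _ = (∫⁻ u in Ioi t, f u ^ q) * (∫⁻ u in Ioi t, h u ^ p) ^ (q - 1) := by
          rw [ENNReal.mul_rpow_of_nonneg _ _ hq0.le, ← ENNReal.rpow_mul, ← ENNReal.rpow_mul,
            one_div_mul_cancel hq0.ne', ENNReal.rpow_one]
          congr 2
          rw [hp]
          field_simp
      _ = _ := by rw [hfq, hhp]

private lemma hardy_tonelli (s : ℝ) (H : ℝ → ℝ≥0∞) (hH : Measurable H) :
    ∫⁻ t in Ioi (0:ℝ), ENNReal.ofReal (t ^ s) * ∫⁻ u in Ioi t, H u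
      = ∫⁻ u in Ioi (0:ℝ), H u * ∫⁻ t in Ioo 0 u, ENNReal.ofReal (t ^ s) := by
  set K : ℝ → ℝ → ℝ≥0∞ := fun t u =>
    {p : ℝ × ℝ | p.1 < p.2}.indicator (fun p => ENNReal.ofReal (p.1 ^ s) * H p.2) (t, u) with hK
  have hKm : AEMeasurable (Function.uncurry K)
      ((volume.restrict (Ioi (0:ℝ))).prod (volume.restrict (Ioi (0:ℝ)))) := by
    refine (Measurable.indicator ?_ (measurableSet_lt measurable_fst measurable_snd)).aemeasurable
    fun_prop
  have left : ∀ t ∈ Ioi (0:ℝ),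
      ∫⁻ u in Ioi (0:ℝ), K t u = ENNReal.ofReal (t ^ s) * ∫⁻ u in Ioi t, H u := by
    intro t ht
    have : ∀ u, K t u = (Ioi t).indicator (fun u => ENNReal.ofReal (t ^ s) * H u) u := by
      intro u
      by_cases h : t < u <;> simp [hK, Set.indicator, h]
    simp_rw [this]
    rw [lintegral_indicator measurableSet_Ioi, Measure.restrict_restrict measurableSet_Ioi,
      inter_eq_left.2 (Ioi_subset_Ioi ht.le), lintegral_const_mul' _ _ ENNReal.ofReal_ne_top]
  have right : ∀ u ∈ Ioi (0:ℝ),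
      ∫⁻ t in Ioi (0:ℝ), K t u = H u * ∫⁻ t in Ioo 0 u, ENNReal.ofReal (t ^ s) := by
    intro u hu
    have : ∀ t, K t u = (Iio u).indicator (fun t => ENNReal.ofReal (t ^ s) * H u) t := by
      intro t
      by_cases h : t < u <;> simp [hK, Set.indicator, h]
    simp_rw [this]
    rw [lintegral_indicator measurableSet_Iio, Measure.restrict_restrict measurableSet_Iio,
      show Iio u ∩ Ioi (0:ℝ) = Ioo 0 u by rw [inter_comm, Ioi_inter_Iio],
      lintegral_mul_const _ (by fun_prop), mul_comm]
  rw [← setLIntegral_congr_fun measurableSet_Ioi left,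
    ← setLIntegral_congr_fun measurableSet_Ioi right,
    lintegral_lintegral_swap hKm]

private lemma hardy_core (q r : ℝ) (hq : 1 ≤ q) (hr : 0 < r) (G : ℝ → ℝ≥0∞)
    (hG : Measurable G) :
    ∫⁻ t in Ioi (0:ℝ), (∫⁻ u in Ioi t, G u) ^ q * ENNReal.ofReal (t ^ (r - 1))
      ≤ ENNReal.ofReal ((q / r) ^ q) *
        ∫⁻ u in Ioi (0:ℝ), G u ^ q * ENNReal.ofReal (u ^ (q + r - 1)) := by
  have hq0 : (0:ℝ) < q := lt_of_lt_of_le one_pos hq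
  have hqr : (0:ℝ) < q / r := div_pos hq0 hr
  set A : ℝ := (q - 1) * (q + r) / q with hA
  set H : ℝ → ℝ≥0∞ := fun u => G u ^ q * ENNReal.ofReal (u ^ A) with hH
  have hHm : Measurable H := by rw [hH]; fun_prop
  -- pointwise bound
  have pointwise : ∀ t ∈ Ioi (0:ℝ),
      (∫⁻ u in Ioi t, G u) ^ q * ENNReal.ofReal (t ^ (r - 1)) ≤
        ENNReal.ofReal ((q / r) ^ (q - 1)) *
          (ENNReal.ofReal (t ^ (r / q - 1)) * ∫⁻ u in Ioi t, H u) := by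
    intro t ht
    have ht0 : (0:ℝ) < t := ht
    have hb := hardy_holder_step q r hq hr G hG ht0
    have hbb := mul_le_mul_left hb (ENNReal.ofReal (t ^ (r - 1)))
    refine hbb.trans (le_of_eq ?_)
    have key : ENNReal.ofReal (q / r * t ^ (-(r / q))) ^ (q - 1) *
        ENNReal.ofReal (t ^ (r - 1)) =
        ENNReal.ofReal ((q / r) ^ (q - 1)) * ENNReal.ofReal (t ^ (r / q - 1)) := by
      have e : (-(r / q)) * (q - 1) + (r - 1) = r / q - 1 := by field_simp; ring
      rw [ENNReal.ofReal_rpow_of_nonneg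
          (mul_nonneg hqr.le (Real.rpow_nonneg ht0.le _)) (by linarith : (0:ℝ) ≤ q - 1),
        Real.mul_rpow hqr.le (Real.rpow_nonneg ht0.le _), ← Real.rpow_mul ht0.le,
        ENNReal.ofReal_mul (Real.rpow_nonneg hqr.le _), mul_assoc,
        ← ENNReal.ofReal_mul (Real.rpow_nonneg ht0.le _), ← Real.rpow_add ht0, e]
    have hHrfl : (∫⁻ u in Ioi t, G u ^ q * ENNReal.ofReal (u ^ ((q - 1) * (q + r) / q)))
        = ∫⁻ u in Ioi t, H u := rfl
    rw [mul_assoc, key, hHrfl]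
    ring
  calc ∫⁻ t in Ioi (0:ℝ), (∫⁻ u in Ioi t, G u) ^ q * ENNReal.ofReal (t ^ (r - 1))
      ≤ ∫⁻ t in Ioi (0:ℝ), ENNReal.ofReal ((q / r) ^ (q - 1)) *
          (ENNReal.ofReal (t ^ (r / q - 1)) * ∫⁻ u in Ioi t, H u) :=
        lintegral_mono_ae (ae_restrict_of_forall_mem measurableSet_Ioi pointwise)
    _ = ENNReal.ofReal ((q / r) ^ (q - 1)) *
          ∫⁻ t in Ioi (0:ℝ), ENNReal.ofReal (t ^ (r / q - 1)) * ∫⁻ u in Ioi t, H u :=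
        lintegral_const_mul' _ _ ENNReal.ofReal_ne_top
    _ = ENNReal.ofReal ((q / r) ^ (q - 1)) *
          ∫⁻ u in Ioi (0:ℝ), H u * ∫⁻ t in Ioo 0 u, ENNReal.ofReal (t ^ (r / q - 1)) := by
        rw [hardy_tonelli _ _ hHm]
    _ = ENNReal.ofReal ((q / r) ^ (q - 1)) * (ENNReal.ofReal (q / r) *
          ∫⁻ u in Ioi (0:ℝ), G u ^ q * ENNReal.ofReal (u ^ (q + r - 1))) := by
        congr 1
        rw [← lintegral_const_mul' _ _ ENNReal.ofReal_ne_top]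
        refine setLIntegral_congr_fun measurableSet_Ioi (fun u hu => ?_)
        have hu0 : (0:ℝ) < u := hu
        rw [lintegral_Ioo_rpow' hu0
          (by have := div_pos hr hq0; linarith : (-1:ℝ) < r / q - 1)]
        have e1 : r / q - 1 + 1 = r / q := by ring
        rw [e1, div_eq_mul_inv, inv_div,
          ENNReal.ofReal_mul (Real.rpow_nonneg hu0.le _)]
        have key : ENNReal.ofReal (u ^ A) * ENNReal.ofReal (u ^ (r / q)) =
            ENNReal.ofReal (u ^ (q + r - 1)) := by
          rw [← ENNReal.ofReal_mul (Real.rpow_nonneg hu0.le _), ← Real.rpow_add hu0]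
          have : A + r / q = q + r - 1 := by rw [hA]; field_simp; ring
          rw [this]
        calc H u * (ENNReal.ofReal (u ^ (r / q)) * ENNReal.ofReal (q / r))
            = ENNReal.ofReal (q / r) *
              (G u ^ q * (ENNReal.ofReal (u ^ A) * ENNReal.ofReal (u ^ (r / q)))) := by
              simp only [hH]; ring
          _ = ENNReal.ofReal (q / r) * (G u ^ q * ENNReal.ofReal (u ^ (q + r - 1))) := by
              rw [key]
    _ = _ := by
        rw [← mul_assoc, ← ENNReal.ofReal_mul (Real.rpow_nonneg hqr.le _)]
        congr 2
        nth_rewrite 2 [← Real.rpow_one (q / r)]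
        rw [← Real.rpow_add hqr]
        norm_num

/-- Hardy's inequality (second form):
`(∫₀^∞ (∫_t^∞ g)^q t^{r-1} dt)^{1/q} ≤ (q/r) (∫₀^∞ (u g(u))^q u^{r-1} du)^{1/q}`. -/
theorem hardy_inequality_second
    (q r : ℝ) (hq : 1 ≤ q) (hr : 0 < r) (g : ℝ → ℝ)
    (hg : Measurable g) (hg0 : ∀ u, 0 < u → 0 ≤ g u) :
    (∫⁻ t in Ioi (0 : ℝ),
        (∫⁻ u in Ioi t, ENNReal.ofReal (g u)) ^ q *
          ENNReal.ofReal (t ^ (r - 1))) ^ (1 / q)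
      ≤ ENNReal.ofReal (q / r) *
        (∫⁻ u in Ioi (0 : ℝ),
          ENNReal.ofReal ((u * g u) ^ q * u ^ (r - 1))) ^ (1 / q) := by
  have hq0 : (0:ℝ) < q := lt_of_lt_of_le one_pos hq
  have hqr : (0:ℝ) < q / r := div_pos hq0 hr
  set G : ℝ → ℝ≥0∞ := fun u => ENNReal.ofReal (g u) with hG
  have hGm : Measurable G := by rw [hG]; fun_prop
  have hRHS : ∫⁻ u in Ioi (0:ℝ), ENNReal.ofReal ((u * g u) ^ q * u ^ (r - 1))
      = ∫⁻ u in Ioi (0:ℝ), G u ^ q * ENNReal.ofReal (u ^ (q + r - 1)) := by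
    refine setLIntegral_congr_fun measurableSet_Ioi (fun u hu => ?_)
    have hu0 : (0:ℝ) < u := hu
    have e : (u * g u) ^ q * u ^ (r - 1) = g u ^ q * u ^ (q + r - 1) := by
      rw [Real.mul_rpow hu0.le (hg0 u hu0), show q + r - 1 = q + (r - 1) by ring,
        Real.rpow_add hu0]
      ring
    rw [e, ENNReal.ofReal_mul (Real.rpow_nonneg (hg0 u hu0) _),
      ← ENNReal.ofReal_rpow_of_nonneg (hg0 u hu0) hq0.le]
  rw [hRHS]
  have core := hardy_core q r hq hr G hGm
  calc (∫⁻ t in Ioi (0:ℝ), (∫⁻ u in Ioi t, G u) ^ q * ENNReal.ofReal (t ^ (r - 1))) ^ (1 / q)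
      ≤ (ENNReal.ofReal ((q / r) ^ q) *
          ∫⁻ u in Ioi (0:ℝ), G u ^ q * ENNReal.ofReal (u ^ (q + r - 1))) ^ (1 / q) :=
        ENNReal.rpow_le_rpow core (by positivity)
    _ = _ := by
        rw [ENNReal.mul_rpow_of_nonneg _ _ (by positivity),
          ENNReal.ofReal_rpow_of_nonneg (Real.rpow_nonneg hqr.le _) (by positivity),
          ← Real.rpow_mul hqr.le, mul_one_div_cancel hq0.ne', Real.rpow_one]
end

section
/- Let (X,d) be a metric space and let μ be a Borel measure on X that is locally Ahlfors Q-regular with constants C_Q and R_0, where Q > 1. Let α ∈ (0,Q) and β ∈ [0,∞). Then there exists a constant C > 0, depending only on Q, α, β and C_Q, such that for every R ∈ (0,R_0), every r ∈ (0,R], every x ∈ X and every nonnegative measurable function f on X, one has ∫_{B(x,r)} ( log(eR/d(x,y)) )^β · d(x,y)^{α−Q} · f(y) dμ(y) ≤ C r^α ( log(eR/r) )^β · M_r f(x), where M_r f(x) = sup_{0<ρ≤r} (1/μ(B(x,ρ))) ∫_{B(x,ρ)} f dμ is the restricted centered Hardy–Littlewood maximal function. -/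
open MeasureTheory Metric Set
open scoped ENNReal

set_option maxHeartbeats 1000000

lemma aux_summable (L α β : ℝ) (hL : 0 ≤ L) (hα : 0 < α) :
    Summable (fun j : ℕ => (1 + ((j:ℝ) + 1) * L) ^ β * (2:ℝ) ^ (-(j:ℝ) * α)) := by
  set q : ℝ := (2:ℝ) ^ (-α) with hq
  have hq0 : 0 < q := Real.rpow_pos_of_pos two_pos _
  have hq1 : q < 1 := Real.rpow_lt_one_of_one_lt_of_neg one_lt_two (by linarith)
  set m : ℕ := ⌈β⌉₊ with hm
  have hsum : Summable (fun n : ℕ => ((n:ℝ) + 1) ^ m * q ^ n) := by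
    have h := summable_pow_mul_geometric_of_norm_lt_one (r := q) m
      (by rw [Real.norm_eq_abs, abs_of_pos hq0]; exact hq1)
    have h2 : Summable (fun n : ℕ => ((n + 1 : ℕ):ℝ) ^ m * q ^ (n + 1)) :=
      (summable_nat_add_iff 1).2 h
    have h3 : Summable (fun n : ℕ => q⁻¹ * (((n + 1 : ℕ):ℝ) ^ m * q ^ (n + 1))) :=
      h2.mul_left _
    refine h3.congr fun n => ?_
    have hqne : q ≠ 0 := ne_of_gt hq0
    push_cast
    rw [pow_succ]
    rw [show q⁻¹ * (((n:ℝ) + 1) ^ m * (q ^ n * q)) = ((n:ℝ) + 1) ^ m * q ^ n * (q⁻¹ * q) by ring,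
      inv_mul_cancel₀ hqne, mul_one]
  refine Summable.of_nonneg_of_le (fun j => ?_) (fun j => ?_) (hsum.mul_left ((1 + L) ^ m))
  · positivity
  · have hB1 : (1:ℝ) ≤ 1 + ((j:ℝ) + 1) * L := by nlinarith [Nat.cast_nonneg (α := ℝ) j]
    have h1 : (1 + ((j:ℝ) + 1) * L) ^ β ≤ (1 + ((j:ℝ) + 1) * L) ^ (m:ℝ) :=
      Real.rpow_le_rpow_of_exponent_le hB1 (Nat.le_ceil β)
    rw [Real.rpow_natCast] at h1
    have h2 : (1 + ((j:ℝ) + 1) * L) ^ m ≤ ((1 + L) * ((j:ℝ) + 1)) ^ m := by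
      apply pow_le_pow_left₀ (by linarith)
      nlinarith [Nat.cast_nonneg (α := ℝ) j]
    have h3 : (2:ℝ) ^ (-(j:ℝ) * α) = q ^ j := by
      rw [hq, ← Real.rpow_natCast (q) j, hq, ← Real.rpow_mul (by norm_num)]
      ring_nf
    rw [h3, mul_pow] at *
    have hqj : (0:ℝ) ≤ q ^ j := le_of_lt (pow_pos hq0 j)
    calc (1 + ((j:ℝ) + 1) * L) ^ β * q ^ j
        ≤ ((1 + L) ^ m * ((j:ℝ) + 1) ^ m) * q ^ j := by
          apply mul_le_mul_of_nonneg_right _ hqj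
          exact h1.trans h2
      _ = (1 + L) ^ m * (((j:ℝ) + 1) ^ m * q ^ j) := by ring

/-- The near part of the Riesz potential is controlled by the restricted centered
Hardy–Littlewood maximal function on a locally Ahlfors `Q`-regular space. -/
theorem riesz_potential_near_part_le_maximal
    {X : Type*} [MetricSpace X] [MeasurableSpace X] [BorelSpace X]
    (μ : Measure X) (Q C_Q : ℝ) (R0 : ℝ≥0∞) (α β : ℝ)
    (hQ : 1 < Q) (hCQ : 1 ≤ C_Q) (hR0 : 0 < R0)
    (hreg : ∀ (x : X) (r : ℝ), 0 < r → ENNReal.ofReal r < R0 →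
      ENNReal.ofReal (C_Q⁻¹ * r ^ Q) ≤ μ (ball x r) ∧
        μ (ball x r) ≤ ENNReal.ofReal (C_Q * r ^ Q))
    (hα : 0 < α) (hαQ : α < Q) (hβ : 0 ≤ β) :
    ∃ C > (0 : ℝ), ∀ (R r : ℝ) (x : X) (f : X → ℝ),
      0 < R → ENNReal.ofReal R < R0 → 0 < r → r ≤ R →
      Measurable f → (∀ y, 0 ≤ f y) →
      ∫⁻ y in ball x r,
          ENNReal.ofReal ((Real.log (Real.exp 1 * R / dist x y)) ^ β *
            dist x y ^ (α - Q) * f y) ∂μ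
        ≤ ENNReal.ofReal (C * r ^ α * (Real.log (Real.exp 1 * R / r)) ^ β) *
          ⨆ ρ ∈ Ioc (0 : ℝ) r,
            (μ (ball x ρ))⁻¹ * ∫⁻ y in ball x ρ, ENNReal.ofReal (f y) ∂μ := by
  have hCQ0 : (0:ℝ) < C_Q := lt_of_lt_of_le one_pos hCQ
  set L : ℝ := Real.log 2 with hLdef
  have hL : 0 < L := Real.log_pos one_lt_two
  have hsum := aux_summable L α β hL.le hα
  set S : ℝ := ∑' j : ℕ, (1 + ((j:ℝ) + 1) * L) ^ β * (2:ℝ) ^ (-(j:ℝ) * α) with hSdef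
  have hS : 0 < S := by
    refine Summable.tsum_pos hsum (fun i => by positivity) 0 ?_
    positivity
  refine ⟨C_Q * 2 ^ (Q - α) * S, by positivity, ?_⟩
  intro R r x f hR hRR0 hr hrR hf hf0
  set lam : ℝ := Real.log (Real.exp 1 * R / r) with hlamdef
  have hlam1 : 1 ≤ lam := by
    rw [hlamdef, mul_div_assoc]
    calc (1:ℝ) = Real.log (Real.exp 1) := (Real.log_exp 1).symm
    _ ≤ Real.log (Real.exp 1 * (R / r)) := by
        apply Real.log_le_log (Real.exp_pos 1)
        nlinarith [Real.exp_pos 1, (one_le_div hr).2 hrR]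
  set M : ℝ≥0∞ := ⨆ ρ ∈ Ioc (0 : ℝ) r,
      (μ (ball x ρ))⁻¹ * ∫⁻ y in ball x ρ, ENNReal.ofReal (f y) ∂μ with hMdef
  -- maximal function bound on balls
  have hball : ∀ ρ : ℝ, 0 < ρ → ρ ≤ r →
      ∫⁻ y in ball x ρ, ENNReal.ofReal (f y) ∂μ ≤ ENNReal.ofReal (C_Q * ρ ^ Q) * M := by
    intro ρ hρ hρr
    have hρR0 : ENNReal.ofReal ρ < R0 :=
      lt_of_le_of_lt (ENNReal.ofReal_le_ofReal (hρr.trans hrR)) hRR0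
    have h12 := hreg x ρ hρ hρR0
    obtain ⟨h1, h2⟩ := h12
    have hne0 : μ (ball x ρ) ≠ 0 := by
      refine fun h => absurd (h ▸ h1) ?_
      simp only [nonpos_iff_eq_zero, ENNReal.ofReal_eq_zero, not_le]
      positivity
    have hnetop : μ (ball x ρ) ≠ ⊤ := (lt_of_le_of_lt h2 ENNReal.ofReal_lt_top).ne
    have key : ∫⁻ y in ball x ρ, ENNReal.ofReal (f y) ∂μ
        = μ (ball x ρ) * ((μ (ball x ρ))⁻¹ * ∫⁻ y in ball x ρ, ENNReal.ofReal (f y) ∂μ) := by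
      rw [← mul_assoc, ENNReal.mul_inv_cancel hne0 hnetop, one_mul]
    rw [key]
    have hM : (μ (ball x ρ))⁻¹ * ∫⁻ y in ball x ρ, ENNReal.ofReal (f y) ∂μ ≤ M := by
      rw [hMdef]
      exact le_biSup (fun ρ => (μ (ball x ρ))⁻¹ * ∫⁻ y in ball x ρ, ENNReal.ofReal (f y) ∂μ) (⟨hρ, hρr⟩ : ρ ∈ Ioc (0:ℝ) r)
    calc μ (ball x ρ) * ((μ (ball x ρ))⁻¹ * ∫⁻ y in ball x ρ, ENNReal.ofReal (f y) ∂μ)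
        ≤ μ (ball x ρ) * M := mul_le_mul_right hM _
      _ ≤ ENNReal.ofReal (C_Q * ρ ^ Q) * M := mul_le_mul_left h2 _
  -- dyadic radii
  set s : ℕ → ℝ := fun j => r * (2:ℝ) ^ (-(j:ℝ)) with hsdef
  have hs_pos : ∀ j, 0 < s j := fun j => by
    simp only [hsdef]; positivity
  have hs_le : ∀ j, s j ≤ r := by
    intro j
    have h1 : (2:ℝ) ^ (-(j:ℝ)) ≤ 1 :=
      Real.rpow_le_one_of_one_le_of_nonpos one_le_two (neg_nonpos.2 (Nat.cast_nonneg j))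
    calc s j = r * (2:ℝ) ^ (-(j:ℝ)) := rfl
    _ ≤ r * 1 := by nlinarith [Real.rpow_pos_of_pos (two_pos (α := ℝ)) (-(j:ℝ))]
    _ = r := mul_one r
  set A : ℕ → Set X := fun j => ball x (s j) \ ball x (s (j + 1)) with hAdef
  -- coverage
  have hcov : ball x r ⊆ {x} ∪ ⋃ j, A j := by
    intro y hy
    rcases eq_or_ne y x with hyx | hyx
    · exact Or.inl hyx
    · right
      have hd0 : 0 < dist y x := dist_pos.2 hyx
      have hdr : dist y x < r := mem_ball.1 hy
      have hex : ∃ n : ℕ, s n ≤ dist y x := by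
        obtain ⟨n, hn⟩ := exists_pow_lt_of_lt_one (div_pos hd0 hr)
          (show (2:ℝ)⁻¹ < 1 by norm_num)
        refine ⟨n, ?_⟩
        have : s n = r * ((2:ℝ)⁻¹) ^ n := by
          rw [hsdef]
          congr 1
          rw [← Real.rpow_natCast ((2:ℝ)⁻¹) n, ← Real.rpow_neg_one (2:ℝ),
            ← Real.rpow_mul (by norm_num)]
          norm_num
        have hlt : (2:ℝ)⁻¹ ^ n * r < dist y x := (lt_div_iff₀ hr).1 hn
        rw [this]
        linarith
      classical
      set N := Nat.find hex with hNdef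
      have hN : s N ≤ dist y x := Nat.find_spec hex
      have hN0 : N ≠ 0 := by
        intro h
        rw [h] at hN
        have : s 0 = r := by simp [hsdef]
        rw [this] at hN
        linarith
      obtain ⟨m, hm⟩ : ∃ m, N = m + 1 := ⟨N - 1, (Nat.succ_pred_eq_of_pos (Nat.pos_of_ne_zero hN0)).symm⟩
      have hmlt : dist y x < s m := by
        have := Nat.find_min hex (m := m) (by omega)
        push_neg at this
        linarith
      refine mem_iUnion.2 ⟨m, ?_, ?_⟩
      · exact mem_ball.2 hmlt
      · rw [mem_ball]
        push_neg
        rw [← hm]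
        exact hN
  -- notation for the integrand
  set g : X → ℝ≥0∞ := fun y => ENNReal.ofReal ((Real.log (Real.exp 1 * R / dist x y)) ^ β *
      dist x y ^ (α - Q) * f y) with hgdef
  have hgx : g x = 0 := by
    simp only [hgdef, dist_self]
    rw [Real.zero_rpow (show α - Q ≠ 0 by linarith)]
    simp
  -- per-annulus bound
  have hAj : ∀ j : ℕ, ∫⁻ y in A j, g y ∂μ ≤
      ENNReal.ofReal ((C_Q * 2 ^ (Q - α) * r ^ α * lam ^ β) *
        ((1 + ((j:ℝ) + 1) * L) ^ β * (2:ℝ) ^ (-(j:ℝ) * α))) * M := by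
    intro j
    set c : ℝ := (1 + ((j:ℝ) + 1) * L) ^ β * lam ^ β * (s (j + 1)) ^ (α - Q) with hcdef
    have hc0 : 0 ≤ c := by
      have := Real.rpow_nonneg (hs_pos (j+1)).le (α - Q)
      have h1 : (0:ℝ) ≤ (1 + ((j:ℝ) + 1) * L) ^ β := Real.rpow_nonneg (by positivity) _
      have h2 : (0:ℝ) ≤ lam ^ β := Real.rpow_nonneg (by linarith) _
      positivity
    have hpt : ∀ y ∈ A j, g y ≤ ENNReal.ofReal (c * f y) := by
      intro y hy
      obtain ⟨hy1, hy2⟩ := hy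
      have hd_lt : dist x y < s j := by rw [dist_comm]; exact mem_ball.1 hy1
      have hd_ge : s (j + 1) ≤ dist x y := by
        rw [dist_comm]; exact not_lt.1 (fun h => hy2 (mem_ball.2 h))
      have hd0 : 0 < dist x y := lt_of_lt_of_le (hs_pos (j+1)) hd_ge
      apply ENNReal.ofReal_le_ofReal
      have b1 : dist x y ^ (α - Q) ≤ (s (j + 1)) ^ (α - Q) :=
        Real.rpow_le_rpow_of_nonpos (hs_pos (j+1)) hd_ge (by linarith)
      have hlog0 : 0 ≤ Real.log (Real.exp 1 * R / dist x y) := by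
        apply Real.log_nonneg
        rw [le_div_iff₀ hd0, one_mul]
        nlinarith [Real.exp_one_gt_d9, hs_le j]
      have hlogle : Real.log (Real.exp 1 * R / dist x y) ≤ lam + ((j:ℝ) + 1) * L := by
        have hsj1 : s (j + 1) = r * (2:ℝ) ^ (-((j:ℝ) + 1)) := by
          simp only [hsdef]; push_cast; ring_nf
        have heq : Real.exp 1 * R / s (j + 1) = (Real.exp 1 * R / r) * (2:ℝ) ^ ((j:ℝ) + 1) := by
          have hb : (0:ℝ) < (2:ℝ) ^ ((j:ℝ) + 1) := Real.rpow_pos_of_pos two_pos _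
          rw [hsj1, Real.rpow_neg (by norm_num : (0:ℝ) ≤ 2)]
          field_simp
        calc Real.log (Real.exp 1 * R / dist x y)
            ≤ Real.log (Real.exp 1 * R / s (j + 1)) := by
              apply Real.log_le_log (by positivity)
              exact div_le_div_of_nonneg_left (by positivity) (hs_pos (j+1)) hd_ge
          _ = lam + ((j:ℝ) + 1) * L := by
              rw [heq, Real.log_mul (by positivity) (by positivity),
                Real.log_rpow two_pos, hlamdef, hLdef]
      have b2 : (Real.log (Real.exp 1 * R / dist x y)) ^ β
          ≤ (1 + ((j:ℝ) + 1) * L) ^ β * lam ^ β := by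
        have step1 : (Real.log (Real.exp 1 * R / dist x y)) ^ β
            ≤ (lam + ((j:ℝ) + 1) * L) ^ β := Real.rpow_le_rpow hlog0 hlogle hβ
        have hjL : (0:ℝ) ≤ ((j:ℝ) + 1) * L := by positivity
        have step2 : (lam + ((j:ℝ) + 1) * L) ^ β ≤ ((1 + ((j:ℝ) + 1) * L) * lam) ^ β := by
          apply Real.rpow_le_rpow (by linarith) (by nlinarith) hβ
        rw [Real.mul_rpow (by positivity) (by linarith)] at step2
        linarith
      rw [hcdef]
      have hdpow0 : (0:ℝ) ≤ dist x y ^ (α - Q) := Real.rpow_nonneg dist_nonneg _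
      have hb2l : (0:ℝ) ≤ (Real.log (Real.exp 1 * R / dist x y)) ^ β := Real.rpow_nonneg hlog0 _
      calc (Real.log (Real.exp 1 * R / dist x y)) ^ β * dist x y ^ (α - Q) * f y
          ≤ ((1 + ((j:ℝ) + 1) * L) ^ β * lam ^ β) * (s (j + 1)) ^ (α - Q) * f y := by
            apply mul_le_mul_of_nonneg_right _ (hf0 y)
            exact mul_le_mul b2 b1 hdpow0 (by positivity)
        _ = (1 + ((j:ℝ) + 1) * L) ^ β * lam ^ β * (s (j + 1)) ^ (α - Q) * f y := by ring
    have hAmeas : MeasurableSet (A j) := measurableSet_ball.diff measurableSet_ball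
    have step1 : ∫⁻ y in A j, g y ∂μ ≤ ∫⁻ y in A j, ENNReal.ofReal (c * f y) ∂μ :=
      setLIntegral_mono' hAmeas hpt
    have step2 : ∫⁻ y in A j, ENNReal.ofReal (c * f y) ∂μ
        = ENNReal.ofReal c * ∫⁻ y in A j, ENNReal.ofReal (f y) ∂μ := by
      rw [← lintegral_const_mul' _ _ ENNReal.ofReal_ne_top]
      congr 1
      ext y
      rw [ENNReal.ofReal_mul hc0]
    have step3 : ∫⁻ y in A j, ENNReal.ofReal (f y) ∂μ
        ≤ ∫⁻ y in ball x (s j), ENNReal.ofReal (f y) ∂μ :=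
      lintegral_mono_set diff_subset
    have step4 := hball (s j) (hs_pos j) (hs_le j)
    have key : c * (C_Q * s j ^ Q) = (C_Q * 2 ^ (Q - α) * r ^ α * lam ^ β) *
        ((1 + ((j:ℝ) + 1) * L) ^ β * (2:ℝ) ^ (-(j:ℝ) * α)) := by
      have hss : s (j+1) ^ (α - Q) * s j ^ Q = 2 ^ (Q - α) * r ^ α * (2:ℝ) ^ (-(j:ℝ) * α) := by
        have h2 : (0:ℝ) ≤ 2 := by norm_num
        have e1 : s (j+1) = r * (2:ℝ) ^ (-((j:ℝ)+1)) := by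
          simp only [hsdef]; push_cast; ring_nf
        have e0 : s j = r * (2:ℝ) ^ (-(j:ℝ)) := rfl
        rw [e1, e0, Real.mul_rpow hr.le (Real.rpow_nonneg h2 _),
          Real.mul_rpow hr.le (Real.rpow_nonneg h2 _),
          ← Real.rpow_mul h2, ← Real.rpow_mul h2]
        rw [show r ^ (α - Q) * 2 ^ (-((j:ℝ)+1) * (α - Q)) * (r ^ Q * 2 ^ (-(j:ℝ) * Q))
            = (r ^ (α - Q) * r ^ Q) * ((2:ℝ) ^ (-((j:ℝ)+1) * (α - Q)) * 2 ^ (-(j:ℝ) * Q))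
            from by ring,
          ← Real.rpow_add hr, ← Real.rpow_add two_pos,
          show α - Q + Q = α from by ring,
          show -((j:ℝ)+1) * (α - Q) + -(j:ℝ) * Q = (Q - α) + -(j:ℝ) * α from by ring,
          Real.rpow_add two_pos]
        ring
      rw [hcdef]
      calc (1 + ((j:ℝ) + 1) * L) ^ β * lam ^ β * s (j + 1) ^ (α - Q) * (C_Q * s j ^ Q)
          = C_Q * (1 + ((j:ℝ) + 1) * L) ^ β * lam ^ β * (s (j+1) ^ (α - Q) * s j ^ Q) := by ring
        _ = _ := by rw [hss]; ring
    calc ∫⁻ y in A j, g y ∂μ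
        ≤ ENNReal.ofReal c * ∫⁻ y in A j, ENNReal.ofReal (f y) ∂μ := step2 ▸ step1
      _ ≤ ENNReal.ofReal c * (ENNReal.ofReal (C_Q * s j ^ Q) * M) :=
          mul_le_mul_right (step3.trans step4) _
      _ = ENNReal.ofReal (c * (C_Q * s j ^ Q)) * M := by
          rw [ENNReal.ofReal_mul hc0, mul_assoc]
      _ = _ := by rw [key]
  -- put everything together
  have hnonneg : ∀ j : ℕ, (0:ℝ) ≤ (1 + ((j:ℝ) + 1) * L) ^ β * (2:ℝ) ^ (-(j:ℝ) * α) := by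
    intro j
    have h1 : (0:ℝ) ≤ (1 + ((j:ℝ) + 1) * L) ^ β := Real.rpow_nonneg (by positivity) _
    positivity
  have hKS : C_Q * 2 ^ (Q - α) * S * r ^ α * lam ^ β
      = (C_Q * 2 ^ (Q - α) * r ^ α * lam ^ β) * S := by ring
  calc ∫⁻ y in ball x r, g y ∂μ
      ≤ ∫⁻ y in {x} ∪ ⋃ j, A j, g y ∂μ := lintegral_mono_set hcov
    _ ≤ (∫⁻ y in {x}, g y ∂μ) + ∫⁻ y in ⋃ j, A j, g y ∂μ := lintegral_union_le _ _ _
    _ = ∫⁻ y in ⋃ j, A j, g y ∂μ := by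
        rw [lintegral_singleton, hgx, zero_mul, zero_add]
    _ ≤ ∑' j : ℕ, ∫⁻ y in A j, g y ∂μ := lintegral_iUnion_le _ _
    _ ≤ ∑' j : ℕ, ENNReal.ofReal ((C_Q * 2 ^ (Q - α) * r ^ α * lam ^ β) *
          ((1 + ((j:ℝ) + 1) * L) ^ β * (2:ℝ) ^ (-(j:ℝ) * α))) * M :=
        ENNReal.tsum_le_tsum fun j => hAj j
    _ = (∑' j : ℕ, ENNReal.ofReal ((C_Q * 2 ^ (Q - α) * r ^ α * lam ^ β) *
          ((1 + ((j:ℝ) + 1) * L) ^ β * (2:ℝ) ^ (-(j:ℝ) * α)))) * M :=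
        ENNReal.tsum_mul_right
    _ = ENNReal.ofReal (C_Q * 2 ^ (Q - α) * S * r ^ α * lam ^ β) * M := by
        congr 1
        rw [hKS, ← ENNReal.ofReal_tsum_of_nonneg (fun j => mul_nonneg (by positivity) (hnonneg j))
          (hsum.mul_left _)]
        rw [tsum_mul_left, hSdef]
end

section
/- Let (X,d) be a metric space and let μ be a Borel measure on X such that μ(B(x,ρ)) ≤ C_Q ρ^Q for every x ∈ X and every ρ ∈ (0,R_0), where Q > 1 and C_Q ≥ 1. Let γ ∈ [0,∞). Then there exists a constant C > 0, depending only on Q, γ and C_Q, such that for every ball B_0 = B(y_0,R) with 0 < R < R_0/4, every x ∈ B_0 and every r ∈ (0,R], one has ∫_{B_0 \ B(x,r)} d(x,y)^{−Q} ( log(eR/d(x,y)) )^γ dμ(y) ≤ C ( log(eR/r) )^{γ+1}. -/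
open MeasureTheory Metric Set
open scoped ENNReal

set_option maxHeartbeats 1000000 in
/-- Logarithmic estimate for the far part of a Riesz kernel of critical exponent:
`∫_{B₀ \ B(x,r)} d(x,y)^{-Q} (log(eR/d(x,y)))^γ dμ(y) ≤ C (log(eR/r))^{γ+1}`. -/
theorem riesz_kernel_critical_far_part_bound
    {X : Type*} [MetricSpace X] [MeasurableSpace X] [BorelSpace X]
    (μ : Measure X) (Q C_Q : ℝ) (R0 : ℝ≥0∞) (γ : ℝ)
    (hQ : 1 < Q) (hCQ : 1 ≤ C_Q)
    (hreg : ∀ (x : X) (ρ : ℝ), 0 < ρ → ENNReal.ofReal ρ < R0 →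
      μ (ball x ρ) ≤ ENNReal.ofReal (C_Q * ρ ^ Q))
    (hγ : 0 ≤ γ) :
    ∃ C > (0 : ℝ), ∀ (y0 x : X) (R r : ℝ),
      0 < R → ENNReal.ofReal R < R0 / 4 → x ∈ ball y0 R → 0 < r → r ≤ R →
      ∫⁻ y in ball y0 R \ ball x r,
          ENNReal.ofReal (dist x y ^ (-Q) *
            (Real.log (Real.exp 1 * R / dist x y)) ^ γ) ∂μ
        ≤ ENNReal.ofReal (C * (Real.log (Real.exp 1 * R / r)) ^ (γ + 1)) := by
  have hCQ0 : (0:ℝ) < C_Q := lt_of_lt_of_le one_pos hCQ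
  have h2Q : (0:ℝ) < (2:ℝ) ^ Q := Real.rpow_pos_of_pos two_pos Q
  refine ⟨4 * C_Q * 2 ^ Q, by positivity, ?_⟩
  intro y0 x R r hR hRR0 hx hr hrR
  set L := Real.log (Real.exp 1 * R / r) with hLdef
  have he1 : (0:ℝ) < Real.exp 1 := Real.exp_pos 1
  have he2 : (2:ℝ) ≤ Real.exp 1 := by have := Real.add_one_le_exp (1:ℝ); linarith
  have hL1 : 1 ≤ L := by
    have h1 : Real.exp 1 ≤ Real.exp 1 * R / r := by
      rw [le_div_iff₀ hr]; nlinarith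
    calc (1:ℝ) = Real.log (Real.exp 1) := (Real.log_exp 1).symm
      _ ≤ L := (Real.log_le_log_iff he1 (by positivity)).mpr h1
  have hLpos : (0:ℝ) < L := lt_of_lt_of_le one_pos hL1
  -- choose N : least n with 2R ≤ 2^n r
  have hex : ∃ n : ℕ, 2 * R ≤ 2 ^ n * r := by
    obtain ⟨n, hn⟩ := pow_unbounded_of_one_lt (2 * R / r) (one_lt_two (α := ℝ))
    refine ⟨n, ?_⟩
    rw [div_lt_iff₀ hr] at hn
    linarith
  set N := Nat.find hex with hNdef
  have hN : 2 * R ≤ 2 ^ N * r := Nat.find_spec hex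
  have hNmin : ∀ m, m < N → (2:ℝ) ^ m * r < 2 * R := by
    intro m hm
    have := Nat.find_min hex hm
    push_neg at this
    exact this
  have hN1 : 1 ≤ N := by
    rcases Nat.eq_zero_or_pos N with h0 | h
    · exfalso
      have := hN
      rw [h0] at this
      simp at this
      linarith
    · exact h
  have hNR : (2:ℝ) ^ N * r < 4 * R := by
    have h1 : (2:ℝ) ^ (N - 1) * r < 2 * R := hNmin (N - 1) (by omega)
    have hpow : (2:ℝ) ^ N = 2 * 2 ^ (N - 1) := by
      rw [← pow_succ']
      congr 1
      omega
    rw [hpow]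
    linarith
  -- N ≤ 4 L
  have hlog2 : (0.6:ℝ) < Real.log 2 := by
    have := Real.log_two_gt_d9; linarith
  have hlog2' : Real.log 2 < 0.7 := by
    have := Real.log_two_lt_d9; linarith
  have hLlog : L = 1 + (Real.log R - Real.log r) := by
    rw [hLdef, Real.log_div (by positivity) (ne_of_gt hr),
      Real.log_mul (ne_of_gt he1) (ne_of_gt hR), Real.log_exp]
    ring
  have hkey : ((N:ℝ) - 1) * Real.log 2 ≤ Real.log 2 + (L - 1) := by
    have h1 : (2:ℝ) ^ (N - 1) * r < 2 * R := hNmin (N - 1) (by omega)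
    have h2 : (2:ℝ) ^ (N - 1) ≤ 2 * R / r := by
      rw [le_div_iff₀ hr]; linarith
    have h3 : Real.log ((2:ℝ) ^ (N - 1)) ≤ Real.log (2 * R / r) :=
      (Real.log_le_log_iff (by positivity) (by positivity)).mpr h2
    rw [Real.log_pow] at h3
    have h4 : Real.log (2 * R / r) = Real.log 2 + (L - 1) := by
      rw [Real.log_div (by positivity) (ne_of_gt hr),
        Real.log_mul two_ne_zero (ne_of_gt hR), hLlog]
      ring
    have hcast : ((N - 1 : ℕ) : ℝ) = (N:ℝ) - 1 := by
      have := Nat.cast_sub (R := ℝ) hN1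
      simpa using this
    rw [hcast, h4] at h3
    exact h3
  have hNle : (N:ℝ) ≤ 4 * L := by
    nlinarith [Nat.cast_nonneg (α := ℝ) N, hL1, hlog2, hlog2', hkey]
  -- annuli
  set A : ℕ → Set X := fun j =>
    (ball x (2 ^ (j + 1) * r) \ ball x (2 ^ j * r)) ∩ ball y0 R with hA
  have hxy0 : dist x y0 < R := mem_ball.mp hx
  have hsub : ball y0 R \ ball x r ⊆ ⋃ i : Fin N, A i := by
    rintro y ⟨hy0, hyr⟩
    have hd : r ≤ dist x y := by
      rw [mem_ball, dist_comm] at hyr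
      push_neg at hyr
      exact hyr
    have hdlt : dist x y < 2 * R := by
      have h2 : dist y0 y < R := by rw [dist_comm]; exact mem_ball.mp hy0
      calc dist x y ≤ dist x y0 + dist y0 y := dist_triangle _ _ _
        _ < 2 * R := by linarith
    have hexj : ∃ j : ℕ, dist x y < 2 ^ (j + 1) * r := by
      refine ⟨N, ?_⟩
      have : (2:ℝ) ^ N * r ≤ 2 ^ (N + 1) * r := by
        have : (2:ℝ) ^ N ≤ 2 ^ (N + 1) := by
          apply pow_le_pow_right₀ (by norm_num)
          omega
        nlinarith
      linarith
    set j := Nat.find hexj with hjdef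
    have hj1 : dist x y < 2 ^ (j + 1) * r := Nat.find_spec hexj
    have hj2 : (2:ℝ) ^ j * r ≤ dist x y := by
      rcases Nat.eq_zero_or_pos j with h0 | hposj
      · rw [h0]; simpa using hd
      · have hmin := Nat.find_min hexj (m := j - 1) (by omega)
        push_neg at hmin
        have : (2:ℝ) ^ (j - 1 + 1) * r ≤ dist x y := hmin
        rwa [Nat.sub_add_cancel hposj] at this
    have hjN : j < N := by
      by_contra hcon
      push_neg at hcon
      have hle : (2:ℝ) ^ N ≤ 2 ^ j := pow_le_pow_right₀ (by norm_num) hcon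
      have : (2:ℝ) ^ N * r ≤ 2 ^ j * r := by nlinarith
      linarith
    refine mem_iUnion.mpr ⟨⟨j, hjN⟩, ⟨⟨?_, ?_⟩, hy0⟩⟩
    · rw [mem_ball, dist_comm]; exact hj1
    · rw [mem_ball, dist_comm]; push_neg; exact hj2
  -- regularity radius check
  have h4R : ENNReal.ofReal (4 * R) ≤ R0 := by
    have hmul : ENNReal.ofReal R * 4 < R0 :=
      (ENNReal.lt_div_iff_mul_lt (Or.inl (by norm_num)) (Or.inl (by norm_num))).mp hRR0
    have : ENNReal.ofReal (4 * R) = ENNReal.ofReal R * 4 := by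
      rw [ENNReal.ofReal_mul (by norm_num : (0:ℝ) ≤ 4)]
      simp [mul_comm]
    rw [this]
    exact le_of_lt hmul
  -- per-annulus bound
  have hterm : ∀ j : ℕ, j < N →
      (∫⁻ y in A j, ENNReal.ofReal (dist x y ^ (-Q) *
        (Real.log (Real.exp 1 * R / dist x y)) ^ γ) ∂μ)
        ≤ ENNReal.ofReal (C_Q * 2 ^ Q * L ^ γ) := by
    intro j hj
    have hrj : (0:ℝ) < 2 ^ j * r := by positivity
    have hrj1 : (0:ℝ) < 2 ^ (j + 1) * r := by positivity
    have hAmeas : MeasurableSet (A j) :=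
      (measurableSet_ball.diff measurableSet_ball).inter measurableSet_ball
    have hpt : ∀ y ∈ A j,
        ENNReal.ofReal (dist x y ^ (-Q) * (Real.log (Real.exp 1 * R / dist x y)) ^ γ)
          ≤ ENNReal.ofReal ((2 ^ j * r) ^ (-Q) * L ^ γ) := by
      rintro y ⟨⟨hy1, hy2⟩, hy3⟩
      have hdge : (2:ℝ) ^ j * r ≤ dist x y := by
        rw [mem_ball, dist_comm] at hy2
        push_neg at hy2
        exact hy2
      have hdpos : 0 < dist x y := lt_of_lt_of_le hrj hdge
      have hdr : r ≤ dist x y := by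
        have h1 : (1:ℝ) ≤ 2 ^ j := one_le_pow₀ (by norm_num : (1:ℝ) ≤ 2)
        nlinarith
      have hdlt : dist x y < 2 * R := by
        have h2 : dist y0 y < R := by rw [dist_comm]; exact mem_ball.mp hy3
        calc dist x y ≤ dist x y0 + dist y0 y := dist_triangle _ _ _
          _ < 2 * R := by linarith
      apply ENNReal.ofReal_le_ofReal
      have h1 : dist x y ^ (-Q) ≤ (2 ^ j * r) ^ (-Q) :=
        Real.rpow_le_rpow_of_nonpos hrj hdge (by linarith)
      have hlognn : 0 ≤ Real.log (Real.exp 1 * R / dist x y) := by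
        apply Real.log_nonneg
        rw [le_div_iff₀ hdpos]
        nlinarith
      have hlogle : Real.log (Real.exp 1 * R / dist x y) ≤ L := by
        rw [hLdef]
        apply (Real.log_le_log_iff (by positivity) (by positivity)).mpr
        apply div_le_div_of_nonneg_left (by positivity) hr hdr
      have h2 : (Real.log (Real.exp 1 * R / dist x y)) ^ γ ≤ L ^ γ :=
        Real.rpow_le_rpow hlognn hlogle hγ
      have hnn1 : (0:ℝ) ≤ (2 ^ j * r) ^ (-Q) := Real.rpow_nonneg (le_of_lt hrj) _
      have hnn2 : (0:ℝ) ≤ (Real.log (Real.exp 1 * R / dist x y)) ^ γ :=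
        Real.rpow_nonneg hlognn _
      have hnn3 : (0:ℝ) ≤ dist x y ^ (-Q) := Real.rpow_nonneg (le_of_lt hdpos) _
      exact mul_le_mul h1 h2 hnn2 hnn1
    have hmeasA : μ (A j) ≤ ENNReal.ofReal (C_Q * (2 ^ (j + 1) * r) ^ Q) := by
      refine le_trans (measure_mono ?_) (hreg x _ hrj1 ?_)
      · rintro y ⟨⟨hy1, _⟩, _⟩; exact hy1
      · have hlt : (2:ℝ) ^ (j + 1) * r < 4 * R := by
          have hle : (2:ℝ) ^ (j + 1) ≤ 2 ^ N := pow_le_pow_right₀ (by norm_num) (by omega)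
          nlinarith
        calc ENNReal.ofReal (2 ^ (j + 1) * r) < ENNReal.ofReal (4 * R) := by
              exact (ENNReal.ofReal_lt_ofReal_iff (by positivity)).mpr hlt
          _ ≤ R0 := h4R
    have heq : ((2 ^ j * r) ^ (-Q) * L ^ γ) * (C_Q * (2 ^ (j + 1) * r) ^ Q)
        = C_Q * 2 ^ Q * L ^ γ := by
      have e1 : (2:ℝ) ^ (j + 1) * r = 2 * (2 ^ j * r) := by ring
      rw [e1, Real.mul_rpow (by norm_num) (le_of_lt hrj)]
      have e2 : ((2:ℝ) ^ j * r) ^ (-Q) * ((2:ℝ) ^ j * r) ^ Q = 1 := by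
        rw [← Real.rpow_add hrj]
        simp
      linear_combination (C_Q * (2:ℝ) ^ Q * L ^ γ) * e2
    calc (∫⁻ y in A j, ENNReal.ofReal (dist x y ^ (-Q) *
            (Real.log (Real.exp 1 * R / dist x y)) ^ γ) ∂μ)
        ≤ ∫⁻ _ in A j, ENNReal.ofReal ((2 ^ j * r) ^ (-Q) * L ^ γ) ∂μ :=
          setLIntegral_mono' hAmeas hpt
      _ = ENNReal.ofReal ((2 ^ j * r) ^ (-Q) * L ^ γ) * μ (A j) := setLIntegral_const _ _
      _ ≤ ENNReal.ofReal ((2 ^ j * r) ^ (-Q) * L ^ γ) *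
            ENNReal.ofReal (C_Q * (2 ^ (j + 1) * r) ^ Q) := by gcongr
      _ = ENNReal.ofReal (((2 ^ j * r) ^ (-Q) * L ^ γ) * (C_Q * (2 ^ (j + 1) * r) ^ Q)) :=
          (ENNReal.ofReal_mul (by positivity)).symm
      _ = ENNReal.ofReal (C_Q * 2 ^ Q * L ^ γ) := by rw [heq]
  -- combine
  have hfinal : (N:ℝ) * (C_Q * 2 ^ Q * L ^ γ) ≤ 4 * C_Q * 2 ^ Q * L ^ (γ + 1) := by
    have hLγ : (0:ℝ) < L ^ γ := Real.rpow_pos_of_pos hLpos _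
    have e3 : L ^ (γ + 1) = L ^ γ * L := Real.rpow_add_one (ne_of_gt hLpos) γ
    rw [e3]
    nlinarith [mul_le_mul_of_nonneg_right hNle (le_of_lt (mul_pos (mul_pos hCQ0 h2Q) hLγ))]
  calc (∫⁻ y in ball y0 R \ ball x r, ENNReal.ofReal (dist x y ^ (-Q) *
          (Real.log (Real.exp 1 * R / dist x y)) ^ γ) ∂μ)
      ≤ ∫⁻ y in ⋃ i : Fin N, A i, ENNReal.ofReal (dist x y ^ (-Q) *
          (Real.log (Real.exp 1 * R / dist x y)) ^ γ) ∂μ := lintegral_mono_set hsub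
    _ ≤ ∑' i : Fin N, ∫⁻ y in A i, ENNReal.ofReal (dist x y ^ (-Q) *
          (Real.log (Real.exp 1 * R / dist x y)) ^ γ) ∂μ := lintegral_iUnion_le _ _
    _ = ∑ i : Fin N, ∫⁻ y in A i, ENNReal.ofReal (dist x y ^ (-Q) *
          (Real.log (Real.exp 1 * R / dist x y)) ^ γ) ∂μ := tsum_fintype _
    _ ≤ ∑ _i : Fin N, ENNReal.ofReal (C_Q * 2 ^ Q * L ^ γ) :=
        Finset.sum_le_sum (fun i _ => hterm i i.isLt)
    _ = (N:ℝ≥0∞) * ENNReal.ofReal (C_Q * 2 ^ Q * L ^ γ) := by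
        rw [Finset.sum_const, Finset.card_univ, Fintype.card_fin, nsmul_eq_mul]
    _ = ENNReal.ofReal ((N:ℝ) * (C_Q * 2 ^ Q * L ^ γ)) := by
        rw [ENNReal.ofReal_mul (Nat.cast_nonneg N), ENNReal.ofReal_natCast]
    _ ≤ ENNReal.ofReal (4 * C_Q * 2 ^ Q * L ^ (γ + 1)) := ENNReal.ofReal_le_ofReal hfinal
end

section
/- Let (X,d) be a metric space and let μ be a Borel measure on X such that μ(B(x,ρ)) ≤ C_Q ρ^Q for every x ∈ X and every ρ ∈ (0,R_0), where Q > 1 and C_Q ≥ 1. Let α ∈ (0,Q) and β ∈ [0,∞). Then there exists a constant C > 0, depending only on Q, α, β and C_Q, such that for every ball B_0 = B(y_0,R) with 0 < R < R_0/4, every x ∈ B_0, every r ∈ (0,R] and every nonnegative measurable function f on B_0, one has ∫_{B_0 \ B(x,r)} ( log(eR/d(x,y)) )^β · d(x,y)^{α−Q} · f(y) dμ(y) ≤ C ‖f‖_{L^{Q/α}(B_0,μ)} ( log(eR/r) )^{β+(Q−α)/Q}. -/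
open MeasureTheory Metric Set
open scoped ENNReal

lemma annulus_bound
    {X : Type*} [MetricSpace X] [MeasurableSpace X] [BorelSpace X]
    (μ : Measure X) (Q C_Q : ℝ) (R0 : ℝ≥0∞)
    (hQ : 1 < Q) (hCQ : 1 ≤ C_Q)
    (hreg : ∀ (x : X) (ρ : ℝ), 0 < ρ → ENNReal.ofReal ρ < R0 →
      μ (ball x ρ) ≤ ENNReal.ofReal (C_Q * ρ ^ Q))
    (b : ℝ) (hb : 0 ≤ b)
    (y0 x : X) (R r : ℝ)
    (hR : 0 < R) (hRR0 : ENNReal.ofReal R < R0 / 4) (hx : x ∈ ball y0 R)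
    (hr : 0 < r) (hrR : r ≤ R) :
    ∫⁻ y in ball y0 R \ ball x r,
        ENNReal.ofReal ((Real.log (Real.exp 1 * R / dist x y)) ^ b * dist x y ^ (-Q)) ∂μ
      ≤ ENNReal.ofReal (2 * (C_Q * 2 ^ Q) *
          Real.log (Real.exp 1 * R / r) ^ (b + 1)) := by
  set L := Real.log (Real.exp 1 * R / r) with hLdef
  have hQ0 : (0:ℝ) < Q := by linarith
  have he : (0:ℝ) < Real.exp 1 := Real.exp_pos 1
  have hL1 : 1 ≤ L := by
    rw [hLdef]
    have h1 : Real.exp 1 ≤ Real.exp 1 * R / r := by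
      rw [le_div_iff₀ hr]
      nlinarith
    calc (1:ℝ) = Real.log (Real.exp 1) := (Real.log_exp 1).symm
    _ ≤ L := by rw [hLdef]; exact Real.log_le_log (by positivity) h1
  have hL0 : (0:ℝ) < L := by linarith
  set S := ball y0 R \ ball x r with hSdef
  have hSmeas : MeasurableSet S := (measurableSet_ball).diff measurableSet_ball
  -- points of S satisfy r ≤ d < 2R
  have hSd : ∀ y ∈ S, r ≤ dist x y ∧ dist x y < 2 * R := by
    intro y hy
    constructor
    · have := hy.2
      simp only [mem_ball, not_lt, dist_comm] at this
      exact this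
    · have h1 : dist x y ≤ dist x y0 + dist y0 y := dist_triangle _ _ _
      have h2 : dist x y0 < R := mem_ball.mp hx
      have h3 : dist y0 y < R := by
        have := hy.1; rw [mem_ball, dist_comm] at this; exact this
      linarith
  -- the cover
  set A : ℕ → Set X := fun j => S ∩ (ball x (2 ^ (j+1) * r) \ ball x (2 ^ j * r)) with hAdef
  have hcover : S ⊆ ⋃ j, A j := by
    intro y hy
    have hd := hSd y hy
    have hdpos : 0 < dist x y := lt_of_lt_of_le hr hd.1
    have hex : ∃ j : ℕ, dist x y < 2 ^ (j+1) * r := by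
      obtain ⟨n, hn⟩ := pow_unbounded_of_one_lt (dist x y / r) (one_lt_two (α := ℝ))
      refine ⟨n, ?_⟩
      rw [div_lt_iff₀ hr] at hn
      have h2n : (2:ℝ) ^ (n+1) = 2 * 2 ^ n := by ring
      nlinarith [pow_pos (zero_lt_two (α := ℝ)) n]
    set j := Nat.find hex with hjdef
    have hj1 : dist x y < 2 ^ (j+1) * r := Nat.find_spec hex
    have hj2 : 2 ^ j * r ≤ dist x y := by
      rcases Nat.eq_zero_or_pos j with h0 | hpos
      · rw [h0]; simpa using hd.1
      · have := Nat.find_min hex (m := j - 1) (by omega)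
        push_neg at this
        have hj11 : j - 1 + 1 = j := by omega
        rwa [hj11] at this
    refine mem_iUnion.mpr ⟨j, hy, ?_, ?_⟩
    · exact mem_ball.mpr (by rwa [dist_comm])
    · simp only [mem_ball, not_lt, dist_comm]; exact hj2
  -- the threshold M
  have hexM : ∃ j : ℕ, 2 * R ≤ 2 ^ j * r := by
    obtain ⟨n, hn⟩ := pow_unbounded_of_one_lt (2 * R / r) (one_lt_two (α := ℝ))
    exact ⟨n, by rw [div_lt_iff₀ hr] at hn; linarith⟩
  set M := Nat.find hexM with hMdef
  have hMpos : 0 < M := by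
    apply Nat.pos_of_ne_zero
    intro h
    have hsp : 2 * R ≤ (2:ℝ) ^ M * r := Nat.find_spec hexM
    rw [h] at hsp
    simp at hsp
    linarith
  -- bound on M
  have hlog2 : Real.log 2 < 1 ∧ (1:ℝ)/2 < Real.log 2 := by
    constructor
    · nlinarith [Real.log_two_lt_d9]
    · nlinarith [Real.log_two_gt_d9]
  have hMle : (M : ℝ) ≤ 2 * L := by
    obtain ⟨K, hK⟩ : ∃ K, M = K + 1 := ⟨M - 1, by omega⟩
    have hKlt : ¬ (2 * R ≤ 2 ^ K * r) := Nat.find_min hexM (by omega)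
    push_neg at hKlt
    have h2K : (2:ℝ) ^ K < 2 * R / r := by rw [lt_div_iff₀ hr]; linarith
    have hlogK : (K : ℝ) * Real.log 2 < Real.log 2 + L - 1 := by
      have h1 : Real.log ((2:ℝ) ^ K) < Real.log (2 * R / r) :=
        Real.log_lt_log (by positivity) h2K
      rw [Real.log_pow] at h1
      have h2 : Real.log (2 * R / r) = Real.log 2 + Real.log R - Real.log r := by
        rw [Real.log_div (by positivity) (ne_of_gt hr), Real.log_mul (by norm_num) (ne_of_gt hR)]
      have h3 : L = 1 + Real.log R - Real.log r := by
        rw [hLdef, Real.log_div (by positivity) (ne_of_gt hr),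
          Real.log_mul (ne_of_gt he) (ne_of_gt hR), Real.log_exp]
      push_cast at h1 ⊢
      rw [h2] at h1
      linarith
    have hKR : (0:ℝ) ≤ (K:ℝ) := Nat.cast_nonneg K
    rw [hK]
    push_cast
    nlinarith [mul_nonneg (sub_nonneg.2 hL1) (by linarith [hlog2.2] : (0:ℝ) ≤ 2 * Real.log 2 - 1),
      hlog2.1, hlog2.2]
  -- per-piece bound
  set c : ℝ≥0∞ := ENNReal.ofReal (C_Q * 2 ^ Q * L ^ b) with hcdef
  have hpiece : ∀ j : ℕ,
      ∫⁻ y in A j, ENNReal.ofReal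
        ((Real.log (Real.exp 1 * R / dist x y)) ^ b * dist x y ^ (-Q)) ∂μ
      ≤ if j < M then c else 0 := by
    intro j
    by_cases hj : j < M
    · simp only [hj, if_true]
      have hjR : 2 ^ j * r < 2 * R := by
        have := Nat.find_min hexM hj
        push_neg at this
        exact this
      have h2j : (0:ℝ) < 2 ^ j * r := by positivity
      -- pointwise bound on A j
      have hpt : ∀ y ∈ A j,
          ENNReal.ofReal ((Real.log (Real.exp 1 * R / dist x y)) ^ b * dist x y ^ (-Q))
          ≤ ENNReal.ofReal (L ^ b * (2 ^ j * r) ^ (-Q)) := by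
        intro y hy
        obtain ⟨hyS, hy2⟩ := hy
        have hd := hSd y hyS
        have hd1 : 2 ^ j * r ≤ dist x y := by
          have := hy2.2
          simp only [mem_ball, not_lt, dist_comm] at this
          exact this
        have hd0 : 0 < dist x y := lt_of_lt_of_le h2j hd1
        apply ENNReal.ofReal_le_ofReal
        have hlognn : 0 ≤ Real.log (Real.exp 1 * R / dist x y) := by
          apply Real.log_nonneg
          rw [le_div_iff₀ hd0]
          nlinarith [Real.exp_one_gt_d9, hd.2]
        apply mul_le_mul
        · apply Real.rpow_le_rpow hlognn _ hb
          apply Real.log_le_log (by positivity)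
          exact div_le_div_of_nonneg_left (by positivity) hr hd.1
        · exact Real.rpow_le_rpow_of_nonpos h2j hd1 (by linarith)
        · positivity
        · positivity
      calc ∫⁻ y in A j, ENNReal.ofReal
            ((Real.log (Real.exp 1 * R / dist x y)) ^ b * dist x y ^ (-Q)) ∂μ
          ≤ ∫⁻ _ in A j, ENNReal.ofReal (L ^ b * (2 ^ j * r) ^ (-Q)) ∂μ := by
            apply setLIntegral_mono' (hSmeas.inter (measurableSet_ball.diff measurableSet_ball)) hpt
        _ = ENNReal.ofReal (L ^ b * (2 ^ j * r) ^ (-Q)) * μ (A j) := setLIntegral_const _ _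
        _ ≤ ENNReal.ofReal (L ^ b * (2 ^ j * r) ^ (-Q)) * ENNReal.ofReal (C_Q * (2 ^ (j+1) * r) ^ Q) := by
            apply mul_le_mul_right
            have hsub : A j ⊆ ball x (2 ^ (j+1) * r) := fun y hy => hy.2.1
            refine le_trans (measure_mono hsub) (hreg x _ (by positivity) ?_)
            have h4R : ENNReal.ofReal (4 * R) ≤ R0 := by
              rw [show (4:ℝ) * R = 4 * R by ring, ENNReal.ofReal_mul (by norm_num)]
              have := (ENNReal.lt_div_iff_mul_lt (Or.inl (by norm_num)) (Or.inl (by norm_num))).mp hRR0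
              rw [mul_comm] at this
              exact le_of_lt (by simpa using this)
            refine lt_of_lt_of_le ?_ h4R
            apply ENNReal.ofReal_lt_ofReal_iff_of_nonneg (by positivity) |>.mpr
            have : (2:ℝ) ^ (j+1) * r = 2 * (2 ^ j * r) := by ring
            rw [this]
            linarith
        _ ≤ c := by
            rw [← ENNReal.ofReal_mul (by positivity)]
            apply ENNReal.ofReal_le_ofReal
            have hexp : (2:ℝ) ^ (j+1) * r = 2 * (2 ^ j * r) := by ring
            rw [hexp, Real.mul_rpow (by norm_num) (le_of_lt h2j)]
            have hcanc : (2 ^ j * r) ^ (-Q) * (2 ^ j * r) ^ Q = 1 := by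
              rw [← Real.rpow_add h2j]; simp
            calc L ^ b * (2 ^ j * r) ^ (-Q) * (C_Q * ((2:ℝ) ^ Q * (2 ^ j * r) ^ Q))
                = C_Q * 2 ^ Q * L ^ b * ((2 ^ j * r) ^ (-Q) * (2 ^ j * r) ^ Q) := by ring
              _ = C_Q * 2 ^ Q * L ^ b := by rw [hcanc, mul_one]
              _ ≤ C_Q * 2 ^ Q * L ^ b := le_refl _
    · simp only [hj, if_false]
      have hempty : A j = ∅ := by
        ext y
        simp only [mem_empty_iff_false, iff_false]
        intro hy
        obtain ⟨hyS, hy2⟩ := hy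
        have hd := hSd y hyS
        have hd1 : 2 ^ j * r ≤ dist x y := by
          have := hy2.2
          simp only [mem_ball, not_lt, dist_comm] at this
          exact this
        have hMj : 2 * R ≤ 2 ^ j * r := by
          have hM2 : 2 * R ≤ (2:ℝ) ^ M * r := Nat.find_spec hexM
          have : (2:ℝ) ^ M ≤ 2 ^ j := by
            apply pow_le_pow_right₀ (by norm_num) (by omega)
          nlinarith
        linarith [hd.2]
      rw [hempty]
      simp
  -- assemble
  calc ∫⁻ y in S, ENNReal.ofReal
        ((Real.log (Real.exp 1 * R / dist x y)) ^ b * dist x y ^ (-Q)) ∂μ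
      ≤ ∫⁻ y in ⋃ j, A j, ENNReal.ofReal
        ((Real.log (Real.exp 1 * R / dist x y)) ^ b * dist x y ^ (-Q)) ∂μ :=
        lintegral_mono_set hcover
    _ ≤ ∑' j, ∫⁻ y in A j, ENNReal.ofReal
        ((Real.log (Real.exp 1 * R / dist x y)) ^ b * dist x y ^ (-Q)) ∂μ :=
        lintegral_iUnion_le _ _
    _ ≤ ∑' j : ℕ, (if j < M then c else 0) := ENNReal.tsum_le_tsum hpiece
    _ = ∑ j ∈ Finset.range M, (if j < M then c else 0) := by
        apply tsum_eq_sum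
        intro j hj
        simp only [Finset.mem_range, not_lt] at hj
        simp [Nat.not_lt.mpr hj]
    _ = (M : ℝ≥0∞) * c := by
        rw [Finset.sum_ite_of_true (fun j hj => Finset.mem_range.mp hj), Finset.sum_const,
          Finset.card_range, nsmul_eq_mul]
    _ ≤ ENNReal.ofReal (2 * L) * c := by
        apply mul_le_mul_left
        rw [← ENNReal.ofReal_natCast]
        exact ENNReal.ofReal_le_ofReal hMle
    _ = ENNReal.ofReal (2 * (C_Q * 2 ^ Q) * L ^ (b + 1)) := by
        rw [hcdef, ← ENNReal.ofReal_mul (by positivity)]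
        congr 1
        rw [Real.rpow_add_one (ne_of_gt hL0)]
        ring

set_option maxHeartbeats 1000000 in
/-- The far part of the Riesz potential of `f` is controlled by the `L^{Q/α}` norm of `f`:
`∫_{B₀ \ B(x,r)} (log(eR/d))^β d^{α-Q} f dμ ≤ C ‖f‖_{L^{Q/α}(B₀)} (log(eR/r))^{β+(Q-α)/Q}`. -/
theorem riesz_potential_far_part_le_norm
    {X : Type*} [MetricSpace X] [MeasurableSpace X] [BorelSpace X]
    (μ : Measure X) (Q C_Q : ℝ) (R0 : ℝ≥0∞) (α β : ℝ)
    (hQ : 1 < Q) (hCQ : 1 ≤ C_Q)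
    (hreg : ∀ (x : X) (ρ : ℝ), 0 < ρ → ENNReal.ofReal ρ < R0 →
      μ (ball x ρ) ≤ ENNReal.ofReal (C_Q * ρ ^ Q))
    (hα : 0 < α) (hαQ : α < Q) (hβ : 0 ≤ β) :
    ∃ C > (0 : ℝ), ∀ (y0 x : X) (R r : ℝ) (f : X → ℝ),
      0 < R → ENNReal.ofReal R < R0 / 4 → x ∈ ball y0 R → 0 < r → r ≤ R →
      Measurable f → (∀ y ∈ ball y0 R, 0 ≤ f y) →
      ∫⁻ y in ball y0 R \ ball x r,
          ENNReal.ofReal ((Real.log (Real.exp 1 * R / dist x y)) ^ β *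
            dist x y ^ (α - Q) * f y) ∂μ
        ≤ ENNReal.ofReal C *
          (∫⁻ y in ball y0 R, ENNReal.ofReal (f y ^ (Q / α)) ∂μ) ^ (α / Q) *
          ENNReal.ofReal ((Real.log (Real.exp 1 * R / r)) ^ (β + (Q - α) / Q)) := by
  
  have hQ0 : (0:ℝ) < Q := by linarith
  have hQα : (0:ℝ) < Q - α := by linarith
  set p := Q / (Q - α) with hpdef
  set q := Q / α with hqdef
  have hp1 : 1 < p := (one_lt_div hQα).mpr (by linarith)
  have hp0 : (0:ℝ) < p := by linarith
  have hq0 : (0:ℝ) < q := by rw [hqdef]; positivity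
  have hpq : p.HolderConjugate q := Real.holderConjugate_iff.mpr ⟨hp1, by rw [hpdef, hqdef]; field_simp; ring⟩
  have hpinv : 1 / p = (Q - α) / Q := by rw [hpdef]; field_simp
  have hC0 : (0:ℝ) < C_Q := by linarith
  have h2Q : (0:ℝ) < (2:ℝ) ^ Q := Real.rpow_pos_of_pos two_pos Q
  have h2C : (0:ℝ) < 2 * (C_Q * 2 ^ Q) := by positivity
  have hqinv : 1 / q = α / Q := by rw [hqdef]; exact one_div_div Q α
  refine ⟨(2 * (C_Q * 2 ^ Q)) ^ ((Q - α) / Q), Real.rpow_pos_of_pos h2C _, ?_⟩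
  intro y0 x R r f hR hRR0 hx hr hrR hf hfnn
  set L := Real.log (Real.exp 1 * R / r) with hLdef
  have he : (0:ℝ) < Real.exp 1 := Real.exp_pos 1
  have hL1 : 1 ≤ L := by
    rw [hLdef]
    have h1 : Real.exp 1 ≤ Real.exp 1 * R / r := by
      rw [le_div_iff₀ hr]; nlinarith
    calc (1:ℝ) = Real.log (Real.exp 1) := (Real.log_exp 1).symm
    _ ≤ L := by rw [hLdef]; exact Real.log_le_log (by positivity) h1
  have hL0 : (0:ℝ) < L := by linarith
  set S := ball y0 R \ ball x r with hSdef
  have hSmeas : MeasurableSet S := measurableSet_ball.diff measurableSet_ball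
  have hSd : ∀ y ∈ S, r ≤ dist x y ∧ dist x y < 2 * R := by
    intro y hy
    constructor
    · have := hy.2
      simp only [mem_ball, not_lt, dist_comm] at this
      exact this
    · have h1 : dist x y ≤ dist x y0 + dist y0 y := dist_triangle _ _ _
      have h2 : dist x y0 < R := mem_ball.mp hx
      have h3 : dist y0 y < R := by
        have := hy.1; rw [mem_ball, dist_comm] at this; exact this
      linarith
  have hSfacts : ∀ y ∈ S, 0 < dist x y ∧ 0 ≤ Real.log (Real.exp 1 * R / dist x y) := by
    intro y hy
    have hd := hSd y hy
    have hd0 : 0 < dist x y := lt_of_lt_of_le hr hd.1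
    refine ⟨hd0, Real.log_nonneg ?_⟩
    rw [le_div_iff₀ hd0]
    nlinarith [Real.exp_one_gt_d9]
  set F : X → ℝ≥0∞ := fun y =>
    ENNReal.ofReal ((Real.log (Real.exp 1 * R / dist x y)) ^ β * dist x y ^ (α - Q)) with hFdef
  set G : X → ℝ≥0∞ := fun y => ENNReal.ofReal (f y) with hGdef
  have hknn : ∀ y ∈ S,
      0 ≤ (Real.log (Real.exp 1 * R / dist x y)) ^ β * dist x y ^ (α - Q) := by
    intro y hy
    have h := hSfacts y hy
    have := Real.rpow_nonneg h.2 β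
    have := Real.rpow_nonneg (le_of_lt h.1) (α - Q)
    positivity
  -- Step 1: rewrite LHS as integral of F * G
  have hstep1 : ∫⁻ y in S,
      ENNReal.ofReal ((Real.log (Real.exp 1 * R / dist x y)) ^ β *
        dist x y ^ (α - Q) * f y) ∂μ = ∫⁻ y in S, (F * G) y ∂μ := by
    apply setLIntegral_congr_fun hSmeas
    intro y hy
    simp only [Pi.mul_apply, hFdef, hGdef]
    rw [ENNReal.ofReal_mul (hknn y hy)]
  -- Step 2: Hölder
  have hFm : Measurable F := by
    rw [hFdef]
    have hd : Measurable fun y : X => dist x y := (continuous_const.dist continuous_id).measurable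
    have h2 : Measurable fun y : X => Real.log (Real.exp 1 * R / dist x y) :=
      Real.measurable_log.comp (measurable_const.div hd)
    exact ((h2.pow_const β).mul (hd.pow_const (α - Q))).ennreal_ofReal
  have hGm : Measurable G := hf.ennreal_ofReal
  have holder : ∫⁻ y in S, (F * G) y ∂μ ≤
      (∫⁻ y in S, F y ^ p ∂μ) ^ (1 / p) * (∫⁻ y in S, G y ^ q ∂μ) ^ (1 / q) :=
    ENNReal.lintegral_mul_le_Lp_mul_Lq (μ.restrict S) hpq hFm.aemeasurable hGm.aemeasurable
  -- Step 3: kernel term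
  have hexp1 : (α - Q) * p = -Q := by rw [hpdef]; field_simp; ring
  have hFp : ∫⁻ y in S, F y ^ p ∂μ = ∫⁻ y in S,
      ENNReal.ofReal ((Real.log (Real.exp 1 * R / dist x y)) ^ (β * p) * dist x y ^ (-Q)) ∂μ := by
    apply setLIntegral_congr_fun hSmeas
    intro y hy
    have h := hSfacts y hy
    rw [hFdef]
    simp only
    rw [ENNReal.ofReal_rpow_of_nonneg (hknn y hy) (le_of_lt hp0)]
    congr 1
    rw [Real.mul_rpow (Real.rpow_nonneg h.2 β) (Real.rpow_nonneg (le_of_lt h.1) (α - Q)),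
      ← Real.rpow_mul h.2, ← Real.rpow_mul (le_of_lt h.1), hexp1]
  have hFbound : (∫⁻ y in S, F y ^ p ∂μ) ^ (1 / p) ≤
      ENNReal.ofReal ((2 * (C_Q * 2 ^ Q)) ^ ((Q - α) / Q) * L ^ (β + (Q - α) / Q)) := by
    rw [hFp]
    have hann := annulus_bound μ Q C_Q R0 hQ hCQ hreg (β * p) (mul_nonneg hβ hp0.le)
      y0 x R r hR hRR0 hx hr hrR
    refine le_trans (ENNReal.rpow_le_rpow hann (by positivity)) ?_
    have hbase : (0:ℝ) ≤ 2 * (C_Q * 2 ^ Q) * L ^ (β * p + 1) := by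
      have := Real.rpow_nonneg hL0.le (β * p + 1)
      nlinarith
    rw [ENNReal.ofReal_rpow_of_nonneg hbase (by positivity)]
    apply ENNReal.ofReal_le_ofReal
    rw [Real.mul_rpow h2C.le (Real.rpow_nonneg (le_of_lt hL0) _),
      ← Real.rpow_mul (le_of_lt hL0)]
    have h1 : (β * p + 1) * (1 / p) = β + (Q - α) / Q := by
      rw [hpdef]
      field_simp
      try ring
    rw [h1, hpinv]
  -- Step 4: f term
  have hGq : ∫⁻ y in S, G y ^ q ∂μ ≤ ∫⁻ y in ball y0 R, ENNReal.ofReal (f y ^ (Q / α)) ∂μ := by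
    have heq : ∫⁻ y in S, G y ^ q ∂μ = ∫⁻ y in S, ENNReal.ofReal (f y ^ (Q / α)) ∂μ := by
      apply setLIntegral_congr_fun hSmeas
      intro y hy
      rw [hGdef]
      simp only
      rw [ENNReal.ofReal_rpow_of_nonneg (hfnn y hy.1) (le_of_lt hq0)]
    rw [heq]
    exact lintegral_mono_set diff_subset
  have hGbound : (∫⁻ y in S, G y ^ q ∂μ) ^ (1 / q) ≤
      (∫⁻ y in ball y0 R, ENNReal.ofReal (f y ^ (Q / α)) ∂μ) ^ (α / Q) := by
    rw [hqinv] at *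
    exact ENNReal.rpow_le_rpow hGq (by positivity)
  -- assemble
  rw [hstep1]
  refine le_trans holder ?_
  refine le_trans (mul_le_mul' hFbound hGbound) ?_
  rw [ENNReal.ofReal_mul (Real.rpow_nonneg h2C.le _)]
  ring_nf
  exact le_refl _
end

section
/- Let Q > 2, let p satisfy 2Q/(Q+2) < p ≤ Q/2, and set p^* = Qp/(Q−p). Let q satisfy Q/2 < q < Q and q ≤ p^*, and set q^* = Qq/(Q−q). Then there exists a constant C > 0, depending only on p, q and Q, such that for every nonincreasing measurable function g : (0,∞) → [0,∞), ( ∫_0^∞ t^{−p^*/q^*} ( t·g(t)^q + ∫_t^∞ g(s)^q ds )^{p^*/q} dt )^{1/p^*} ≤ C ( ∫_0^∞ g(t)^p dt )^{1/p}. -/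
open MeasureTheory Set
open scoped ENNReal

lemma myLintegral_Ioi_rpow {a t : ℝ} (ha : a < -1) (ht : 0 < t) :
    ∫⁻ s in Ioi t, ENNReal.ofReal (s ^ a) = ENNReal.ofReal (t ^ (a + 1) / (-(a + 1))) := by
  rw [← MeasureTheory.ofReal_integral_eq_lintegral_ofReal
      (integrableOn_Ioi_rpow_of_lt ha ht)
      ((ae_restrict_iff' measurableSet_Ioi).2 (Filter.Eventually.of_forall fun s hs =>
        Real.rpow_nonneg (le_of_lt (ht.trans hs)) a)),
    integral_Ioi_rpow_of_lt ha ht, neg_div, div_neg]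

lemma myLintegral_Ioo_rpow {b s : ℝ} (hb : -1 < b) (hs : 0 < s) :
    ∫⁻ t in Ioo (0:ℝ) s, ENNReal.ofReal (t ^ b) = ENNReal.ofReal (s ^ (b + 1) / (b + 1)) := by
  rw [setLIntegral_congr Ioo_ae_eq_Ioc]
  have hint : IntegrableOn (fun t : ℝ => t ^ b) (Ioc (0:ℝ) s) := by
    have := (intervalIntegral.intervalIntegrable_rpow' (a := 0) (b := s) hb)
    rwa [intervalIntegrable_iff, uIoc_of_le hs.le] at this
  rw [← MeasureTheory.ofReal_integral_eq_lintegral_ofReal hint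
      ((ae_restrict_iff' measurableSet_Ioc).2 (Filter.Eventually.of_forall fun t htm =>
        Real.rpow_nonneg (le_of_lt htm.1) b))]
  rw [← intervalIntegral.integral_of_le hs.le, integral_rpow (Or.inl hb),
    Real.zero_rpow (by linarith : b + 1 ≠ 0)]
  norm_num

lemma myFubini_tail {F : ℝ → ℝ≥0∞} (hF : Measurable F) {d : ℝ} (hd : -1 < d) :
    ∫⁻ t in Ioi (0:ℝ), ENNReal.ofReal (t ^ d) * ∫⁻ s in Ioi t, F s
      = ∫⁻ s in Ioi (0:ℝ), ENNReal.ofReal (s ^ (d + 1) / (d + 1)) * F s := by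
  have hwm : Measurable fun t : ℝ => ENNReal.ofReal (t ^ d) := by fun_prop
  set G : ℝ × ℝ → ℝ≥0∞ :=
    ({z : ℝ × ℝ | z.1 < z.2}).indicator (fun z => ENNReal.ofReal (z.1 ^ d) * F z.2) with hG
  have hGm : Measurable G :=
    Measurable.indicator ((hwm.comp measurable_fst).mul (hF.comp measurable_snd))
      (measurableSet_lt measurable_fst measurable_snd)
  have step1 : ∀ t ∈ Ioi (0:ℝ),
      ENNReal.ofReal (t ^ d) * ∫⁻ s in Ioi t, F s = ∫⁻ s in Ioi (0:ℝ), G (t, s) := by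
    intro t ht
    have hfun : (fun s => G (t, s)) = (Ioi t).indicator (fun s => ENNReal.ofReal (t ^ d) * F s) := by
      funext s
      by_cases h : t < s <;> simp [hG, Set.indicator_apply, h]
    rw [hfun, lintegral_indicator measurableSet_Ioi, Measure.restrict_restrict measurableSet_Ioi,
      inter_eq_left.mpr (Ioi_subset_Ioi (le_of_lt ht)), lintegral_const_mul _ hF]
  have step3 : ∀ s ∈ Ioi (0:ℝ),
      (∫⁻ t in Ioi (0:ℝ), G (t, s)) = ENNReal.ofReal (s ^ (d + 1) / (d + 1)) * F s := by
    intro s hs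
    have hfun : (fun t => G (t, s)) = (Iio s).indicator (fun t => ENNReal.ofReal (t ^ d) * F s) := by
      funext t
      by_cases h : t < s <;> simp [hG, Set.indicator_apply, h]
    rw [hfun, lintegral_indicator measurableSet_Iio, Measure.restrict_restrict measurableSet_Iio,
      Set.Iio_inter_Ioi, lintegral_mul_const _ hwm, myLintegral_Ioo_rpow hd hs, mul_comm]
  calc ∫⁻ t in Ioi (0:ℝ), ENNReal.ofReal (t ^ d) * ∫⁻ s in Ioi t, F s
      = ∫⁻ t in Ioi (0:ℝ), ∫⁻ s in Ioi (0:ℝ), G (t, s) :=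
        setLIntegral_congr_fun measurableSet_Ioi step1
    _ = ∫⁻ s in Ioi (0:ℝ), ∫⁻ t in Ioi (0:ℝ), G (t, s) :=
        lintegral_lintegral_swap hGm.aemeasurable
    _ = ∫⁻ s in Ioi (0:ℝ), ENNReal.ofReal (s ^ (d + 1) / (d + 1)) * F s :=
        setLIntegral_congr_fun measurableSet_Ioi step3

lemma myT2_bound {β r : ℝ} (hβ0 : 0 < β) (hβ1 : β < 1) (hr : 1 ≤ r) :
    ∃ c : ℝ, 0 < c ∧ ∀ f : ℝ → ℝ≥0∞, Measurable f →
      ∫⁻ t in Ioi (0:ℝ), ENNReal.ofReal (t ^ (-β)) * (∫⁻ s in Ioi t, f s) ^ r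
        ≤ ENNReal.ofReal c * ∫⁻ s in Ioi (0:ℝ), ENNReal.ofReal (s ^ (r - β)) * f s ^ r := by
  rcases eq_or_lt_of_le hr with hr1 | hr1
  · -- r = 1
    subst hr1
    have h1 : (0:ℝ) < 1 - β := by linarith
    refine ⟨1 / (1 - β), by positivity, ?_⟩
    intro f hf
    simp only [ENNReal.rpow_one]
    rw [myFubini_tail hf (by linarith : (-1:ℝ) < -β),
      ← lintegral_const_mul (f := fun s : ℝ => ENNReal.ofReal (s ^ ((1:ℝ) - β)) * f s) _ ((by fun_prop : Measurable fun s : ℝ =>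
        ENNReal.ofReal (s ^ ((1:ℝ) - β))).mul hf)]
    refine le_of_eq (setLIntegral_congr_fun measurableSet_Ioi
      (fun s hs => ?_))
    rw [← mul_assoc, ← ENNReal.ofReal_mul (by positivity)]
    congr 2
    rw [show -β + 1 = 1 - β by ring]
    field_simp
  · -- 1 < r
    have hr0 : (0:ℝ) < r := by linarith
    have hrne : r ≠ 0 := ne_of_gt hr0
    have hr1ne : r - 1 ≠ 0 := by intro h; rw [sub_eq_zero] at h; exact absurd h.symm (ne_of_lt hr1)
    set r' : ℝ := r / (r - 1) with hr'def
    have hconj : r.HolderConjugate r' := by rw [hr'def]; exact Real.HolderConjugate.conjExponent hr1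
    have hrr' : r' * (r - 1) = r := by rw [hr'def]; field_simp
    set γ : ℝ := (2 * r - 1 - β) / (2 * r) with hγdef
    have hγr : γ * r = (2 * r - 1 - β) / 2 := by
      rw [hγdef, div_mul_eq_mul_div, mul_comm 2 r, ← div_div, mul_div_assoc,
        div_self hrne, mul_one]
    have hγr' : 1 < γ * r' := by
      have h1 : γ * r' = (2 * r - 1 - β) / (2 * (r - 1)) := by
        rw [hγdef, hr'def, div_mul_div_comm]
        rw [div_eq_div_iff (by positivity) (by nlinarith)]
        ring
      rw [h1, lt_div_iff₀ (by linarith)]; linarith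
    have ha : -(γ * r') < -1 := by linarith
    set δ : ℝ := -β + (-(γ * r') + 1) * (r - 1) with hδdef
    have hδeq : δ = r - 1 - γ * r - β := by
      rw [hδdef, show (-(γ * r') + 1) * (r - 1) = -(γ * (r' * (r - 1))) + (r - 1) by ring, hrr']
      ring
    have hδ : -1 < δ := by rw [hδeq]; linarith [hγr]
    have hδγ : δ + 1 + γ * r = r - β := by rw [hδeq]; ring
    have hγr'1 : (0:ℝ) < γ * r' - 1 := by linarith
    have hc0 : (0:ℝ) < (1 / (γ * r' - 1)) ^ (r - 1) :=
      Real.rpow_pos_of_pos (one_div_pos.mpr hγr'1) _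
    have hδ1 : (0:ℝ) < δ + 1 := by linarith
    refine ⟨(1 / (γ * r' - 1)) ^ (r - 1) * (1 / (δ + 1)),
      mul_pos hc0 (one_div_pos.mpr hδ1), ?_⟩
    intro f hf
    set c0 : ℝ := (1 / (γ * r' - 1)) ^ (r - 1) with hc0def
    set J : ℝ → ℝ≥0∞ := fun t => ∫⁻ s in Ioi t, f s ^ r * ENNReal.ofReal (s ^ (γ * r))
      with hJdef
    have hJanti : Antitone J := fun t1 t2 h => lintegral_mono_set (Ioi_subset_Ioi h)
    have hJm : Measurable J := hJanti.measurable
    have hFm : Measurable fun s : ℝ => f s ^ r * ENNReal.ofReal (s ^ (γ * r)) :=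
      (hf.pow_const r).mul (by fun_prop)
    -- pointwise Hölder
    have stepA : ∀ t ∈ Ioi (0:ℝ), (∫⁻ s in Ioi t, f s)
        ≤ J t ^ (1/r) * (ENNReal.ofReal (t ^ (-(γ * r') + 1) / (-(-(γ * r') + 1)))) ^ (1/r') := by
      intro t ht
      have ht0 : (0:ℝ) < t := ht
      have h1 : ∫⁻ s in Ioi t, f s
          = ∫⁻ s in Ioi t, (f s * ENNReal.ofReal (s ^ γ)) * ENNReal.ofReal (s ^ (-γ)) := by
        refine setLIntegral_congr_fun measurableSet_Ioi
          (fun s hs => ?_)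
        have hs0 : (0:ℝ) < s := ht0.trans hs
        rw [mul_assoc, ← ENNReal.ofReal_mul (Real.rpow_nonneg hs0.le _),
          ← Real.rpow_add hs0, add_neg_cancel, Real.rpow_zero, ENNReal.ofReal_one, mul_one]
      have h2 := ENNReal.lintegral_mul_le_Lp_mul_Lq (volume.restrict (Ioi t)) hconj
        ((hf.mul (by fun_prop : Measurable fun s : ℝ => ENNReal.ofReal (s ^ γ))).aemeasurable)
        ((by fun_prop : Measurable fun s : ℝ => ENNReal.ofReal (s ^ (-γ))).aemeasurable)
      simp only [Pi.mul_apply] at h2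
      rw [h1]
      refine le_trans h2 ?_
      have e1 : ∫⁻ s in Ioi t, (f s * ENNReal.ofReal (s ^ γ)) ^ r = J t := by
        refine setLIntegral_congr_fun measurableSet_Ioi
          (fun s hs => ?_)
        have hs0 : (0:ℝ) < s := ht0.trans hs
        rw [ENNReal.mul_rpow_of_nonneg _ _ hr0.le,
          ENNReal.ofReal_rpow_of_pos (Real.rpow_pos_of_pos hs0 _),
          ← Real.rpow_mul hs0.le]
      have e2 : ∫⁻ s in Ioi t, ENNReal.ofReal (s ^ (-γ)) ^ r'
          = ENNReal.ofReal (t ^ (-(γ * r') + 1) / (-(-(γ * r') + 1))) := by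
        have e2a : ∫⁻ s in Ioi t, ENNReal.ofReal (s ^ (-γ)) ^ r'
            = ∫⁻ s in Ioi t, ENNReal.ofReal (s ^ (-(γ * r'))) := by
          refine setLIntegral_congr_fun measurableSet_Ioi
            (fun s hs => ?_)
          have hs0 : (0:ℝ) < s := ht0.trans hs
          rw [ENNReal.ofReal_rpow_of_pos (Real.rpow_pos_of_pos hs0 _),
            ← Real.rpow_mul hs0.le, neg_mul]
        rw [e2a, myLintegral_Ioi_rpow ha ht0]
      rw [e1, e2]
    -- pointwise bound on the integrand
    have stepB : ∀ t ∈ Ioi (0:ℝ),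
        ENNReal.ofReal (t ^ (-β)) * (∫⁻ s in Ioi t, f s) ^ r
          ≤ ENNReal.ofReal c0 * (ENNReal.ofReal (t ^ δ) * J t) := by
      intro t ht
      have ht0 : (0:ℝ) < t := ht
      have h3 : (∫⁻ s in Ioi t, f s) ^ r
          ≤ (J t ^ (1/r) *
            (ENNReal.ofReal (t ^ (-(γ * r') + 1) / (-(-(γ * r') + 1)))) ^ (1/r')) ^ r :=
        ENNReal.rpow_le_rpow (stepA t ht) hr0.le
      have h4 : (J t ^ (1/r) *
            (ENNReal.ofReal (t ^ (-(γ * r') + 1) / (-(-(γ * r') + 1)))) ^ (1/r')) ^ r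
          = J t * (ENNReal.ofReal (t ^ (-(γ * r') + 1) / (-(-(γ * r') + 1)))) ^ (r - 1) := by
        rw [ENNReal.mul_rpow_of_nonneg _ _ hr0.le, ← ENNReal.rpow_mul, ← ENNReal.rpow_mul,
          show 1/r * r = 1 by field_simp, ENNReal.rpow_one,
          show 1/r' * r = r - 1 by rw [one_div, inv_mul_eq_div, hconj.div_conj_eq_sub_one]]
      have h5 : (ENNReal.ofReal (t ^ (-(γ * r') + 1) / (-(-(γ * r') + 1)))) ^ (r - 1)
          = ENNReal.ofReal (t ^ ((-(γ * r') + 1) * (r - 1))) * ENNReal.ofReal c0 := by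
        rw [show -(-(γ * r') + 1) = γ * r' - 1 by ring,
          ENNReal.ofReal_rpow_of_pos (div_pos (Real.rpow_pos_of_pos ht0 _) hγr'1),
          Real.div_rpow (Real.rpow_nonneg ht0.le _) hγr'1.le,
          ← Real.rpow_mul ht0.le, div_eq_mul_inv, hc0def,
          ENNReal.ofReal_mul (Real.rpow_nonneg ht0.le _)]
        congr 1
        rw [one_div, Real.inv_rpow hγr'1.le]
      calc ENNReal.ofReal (t ^ (-β)) * (∫⁻ s in Ioi t, f s) ^ r
          ≤ ENNReal.ofReal (t ^ (-β)) *
            (J t * (ENNReal.ofReal (t ^ ((-(γ * r') + 1) * (r - 1))) * ENNReal.ofReal c0)) := by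
            rw [← h5, ← h4]; exact mul_le_mul_right h3 _
        _ = ENNReal.ofReal c0 *
            ((ENNReal.ofReal (t ^ (-β)) * ENNReal.ofReal (t ^ ((-(γ * r') + 1) * (r - 1)))) *
              J t) := by ring
        _ = ENNReal.ofReal c0 * (ENNReal.ofReal (t ^ δ) * J t) := by
            rw [← ENNReal.ofReal_mul (Real.rpow_nonneg ht0.le _), ← Real.rpow_add ht0, hδdef]
    -- integrate the pointwise bound and apply Fubini
    have hup : Measurable fun t : ℝ =>
        ENNReal.ofReal c0 * (ENNReal.ofReal (t ^ δ) * J t) :=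
      measurable_const.mul ((by fun_prop : Measurable fun t : ℝ =>
        ENNReal.ofReal (t ^ δ)).mul hJm)
    calc ∫⁻ t in Ioi (0:ℝ), ENNReal.ofReal (t ^ (-β)) * (∫⁻ s in Ioi t, f s) ^ r
        ≤ ∫⁻ t in Ioi (0:ℝ), ENNReal.ofReal c0 * (ENNReal.ofReal (t ^ δ) * J t) :=
          setLIntegral_mono hup stepB
      _ = ENNReal.ofReal c0 * ∫⁻ t in Ioi (0:ℝ), ENNReal.ofReal (t ^ δ) * J t :=
          lintegral_const_mul _ ((by fun_prop : Measurable fun t : ℝ =>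
            ENNReal.ofReal (t ^ δ)).mul hJm)
      _ = ENNReal.ofReal c0 * ∫⁻ s in Ioi (0:ℝ),
            ENNReal.ofReal (s ^ (δ + 1) / (δ + 1)) * (f s ^ r * ENNReal.ofReal (s ^ (γ * r))) := by
          rw [myFubini_tail hFm hδ]
      _ = ENNReal.ofReal c0 * ∫⁻ s in Ioi (0:ℝ),
            ENNReal.ofReal (1 / (δ + 1)) * (ENNReal.ofReal (s ^ (r - β)) * f s ^ r) := by
          congr 1
          refine setLIntegral_congr_fun measurableSet_Ioi
            (fun s hs => ?_)
          have hs0 : (0:ℝ) < s := hs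
          rw [div_eq_mul_one_div, ENNReal.ofReal_mul (Real.rpow_nonneg hs0.le _)]
          rw [show ENNReal.ofReal (s ^ (δ + 1)) * ENNReal.ofReal (1 / (δ + 1)) *
              (f s ^ r * ENNReal.ofReal (s ^ (γ * r)))
            = ENNReal.ofReal (1 / (δ + 1)) *
              ((ENNReal.ofReal (s ^ (δ + 1)) * ENNReal.ofReal (s ^ (γ * r))) * f s ^ r) by ring,
            ← ENNReal.ofReal_mul (Real.rpow_nonneg hs0.le _), ← Real.rpow_add hs0, hδγ]
      _ = ENNReal.ofReal (c0 * (1 / (δ + 1))) *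
            ∫⁻ s in Ioi (0:ℝ), ENNReal.ofReal (s ^ (r - β)) * f s ^ r := by
          rw [lintegral_const_mul (f := fun s : ℝ => ENNReal.ofReal (s ^ (r - β)) * f s ^ r) _ ((by fun_prop : Measurable fun s : ℝ =>
              ENNReal.ofReal (s ^ (r - β))).mul (hf.pow_const r)),
            ENNReal.ofReal_mul hc0.le, mul_assoc]

/-- Interpolation-type estimate for nonincreasing rearrangements: for `Q > 2`,
`2Q/(Q+2) < p ≤ Q/2`, `p^* = Qp/(Q-p)`, `Q/2 < q < Q` with `q ≤ p^*`, and
`q^* = Qq/(Q-q)`,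
`(∫₀^∞ t^{-p^*/q^*} (t g(t)^q + ∫_t^∞ g^q)^{p^*/q} dt)^{1/p^*} ≤ C (∫₀^∞ g^p)^{1/p}`
for every nonincreasing `g : (0,∞) → [0,∞)`. -/
theorem rearrangement_interpolation_high
    (Q p q : ℝ) (hQ : 2 < Q) (hp1 : 2 * Q / (Q + 2) < p) (hp2 : p ≤ Q / 2)
    (hq1 : Q / 2 < q) (hq2 : q < Q) (hq3 : q ≤ Q * p / (Q - p)) :
    ∃ C > (0 : ℝ), ∀ g : ℝ → ℝ, Measurable g → (∀ t, 0 < t → 0 ≤ g t) →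
      (∀ s t, 0 < s → s ≤ t → g t ≤ g s) →
      (∫⁻ t in Ioi (0 : ℝ),
          ENNReal.ofReal (t ^ (-(Q * p / (Q - p)) / (Q * q / (Q - q)))) *
            (ENNReal.ofReal (t * g t ^ q) +
              ∫⁻ s in Ioi t, ENNReal.ofReal (g s ^ q)) ^ ((Q * p / (Q - p)) / q))
          ^ (1 / (Q * p / (Q - p)))
        ≤ ENNReal.ofReal C *
          (∫⁻ t in Ioi (0 : ℝ), ENNReal.ofReal (g t ^ p)) ^ (1 / p) := by
  have hQ0 : (0:ℝ) < Q := by linarith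
  have hp0 : (0:ℝ) < p := lt_trans (by positivity) hp1
  have hq0 : (0:ℝ) < q := by linarith
  have hQp : (0:ℝ) < Q - p := by linarith
  have hQq : (0:ℝ) < Q - q := by linarith
  set P : ℝ := Q * p / (Q - p) with hPdef
  have hP0 : (0:ℝ) < P := by positivity
  have hpq : p < q := by linarith
  have hpP : p < P := by rw [hPdef, lt_div_iff₀ hQp]; nlinarith
  have hr1 : 1 ≤ P / q := (one_le_div hq0).2 hq3
  have hr0 : 0 < P / q := by positivity
  set β : ℝ := P / (Q * q / (Q - q)) with hβdef
  have hqs0 : (0:ℝ) < Q * q / (Q - q) := by positivity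
  have hβ0 : 0 < β := by rw [hβdef]; positivity
  have hβ1 : β < 1 := by
    rw [hβdef, div_lt_one hqs0, hPdef, div_lt_div_iff₀ hQp hQq]
    nlinarith [mul_lt_mul_of_pos_left hpq (mul_pos hQ0 hQ0)]
  have hkey : P / q - β = P / p - 1 := by
    rw [hβdef, hPdef]; field_simp; ring
  have hPp1 : (1:ℝ) < P / p := (one_lt_div hp0).2 hpP
  have hexp : -P / (Q * q / (Q - q)) = -β := by rw [neg_div, ← hβdef]
  obtain ⟨c, hc, hT2⟩ := myT2_bound hβ0 hβ1 hr1
  set M : ℝ≥0∞ := ((2:ℝ≥0∞) ^ (P/q - 1) * (1 + ENNReal.ofReal c)) ^ (1/P) with hMdef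
  have hMtop : M ≠ ⊤ := by
    rw [hMdef]
    refine ENNReal.rpow_ne_top_of_nonneg (by positivity) (ENNReal.mul_ne_top ?_ ?_)
    · exact ENNReal.rpow_ne_top_of_nonneg (by linarith) (by norm_num)
    · exact ENNReal.add_ne_top.2 ⟨by norm_num, ENNReal.ofReal_ne_top⟩
  refine ⟨M.toReal + 1, by positivity, ?_⟩
  intro g hg hgpos hgmono
  have hCM : M ≤ ENNReal.ofReal (M.toReal + 1) := by
    calc M = ENNReal.ofReal M.toReal := (ENNReal.ofReal_toReal hMtop).symm
      _ ≤ ENNReal.ofReal (M.toReal + 1) := ENNReal.ofReal_le_ofReal (by linarith)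
  set A : ℝ≥0∞ := ∫⁻ t in Ioi (0:ℝ), ENNReal.ofReal (g t ^ p) with hAdef
  have hgpm : Measurable fun s : ℝ => ENNReal.ofReal (g s ^ p) :=
    (hg.pow measurable_const).ennreal_ofReal
  have hgqm : Measurable fun s : ℝ => ENNReal.ofReal (g s ^ q) :=
    (hg.pow measurable_const).ennreal_ofReal
  have hL1 : ∀ t : ℝ, 0 < t → ENNReal.ofReal t * ENNReal.ofReal (g t ^ p) ≤ A := by
    intro t ht
    have h1 : ENNReal.ofReal t * ENNReal.ofReal (g t ^ p)
        = ∫⁻ _ in Ioc (0:ℝ) t, ENNReal.ofReal (g t ^ p) := by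
      rw [setLIntegral_const, Real.volume_Ioc, sub_zero, mul_comm]
    rw [h1]
    refine le_trans (setLIntegral_mono hgpm fun s hs => ENNReal.ofReal_le_ofReal
      (Real.rpow_le_rpow (hgpos t ht) (hgmono s t hs.1 hs.2) hp0.le)) ?_
    exact lintegral_mono_set Ioc_subset_Ioi_self
  simp only [hexp]
  rcases eq_or_ne A 0 with hA0 | hA0
  · -- A = 0 : g vanishes on (0,∞)
    have hg0 : ∀ t : ℝ, 0 < t → g t = 0 := by
      intro t ht
      by_contra hne
      have hgt : 0 < g t := lt_of_le_of_ne (hgpos t ht) (Ne.symm hne)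
      have h := hL1 t ht
      rw [hA0, le_zero_iff, mul_eq_zero] at h
      rcases h with h | h
      · exact absurd h (by simp [ENNReal.ofReal_eq_zero, not_le, ht])
      · rw [ENNReal.ofReal_eq_zero] at h
        exact absurd h (not_le.2 (Real.rpow_pos_of_pos hgt p))
    have hzero : (∫⁻ t in Ioi (0:ℝ), ENNReal.ofReal (t ^ (-β)) *
        (ENNReal.ofReal (t * g t ^ q) +
          ∫⁻ s in Ioi t, ENNReal.ofReal (g s ^ q)) ^ (P / q)) = 0 := by
      rw [setLIntegral_congr_fun measurableSet_Ioi (fun t ht => ?_), lintegral_zero]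
      have hX : ENNReal.ofReal (t * g t ^ q) = 0 := by
        rw [hg0 t ht, Real.zero_rpow hq0.ne', mul_zero, ENNReal.ofReal_zero]
      have hY : (∫⁻ s in Ioi t, ENNReal.ofReal (g s ^ q)) = 0 := by
        rw [setLIntegral_congr_fun measurableSet_Ioi (fun s hs => ?_), lintegral_zero]
        rw [hg0 s (lt_trans ht hs), Real.zero_rpow hq0.ne', ENNReal.ofReal_zero]
      rw [hX, hY, zero_add, ENNReal.zero_rpow_of_pos hr0, mul_zero]
    rw [hzero, ENNReal.zero_rpow_of_pos (by positivity)]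
    exact zero_le
  rcases eq_or_ne A ⊤ with hAtop | hAtop
  · rw [hAtop, ENNReal.top_rpow_of_pos (by positivity), ENNReal.mul_top
      (by simp [ENNReal.ofReal_eq_zero]; positivity)]
    exact le_top
  -- main case : 0 < A < ∞
  have hppe : 0 ≤ P / p - 1 := by linarith
  set S : ℝ≥0∞ := ∫⁻ s in Ioi (0:ℝ), ENNReal.ofReal (s ^ (P/p - 1) * g s ^ P) with hSdef
  have hS : S ≤ A ^ (P/p) := by
    have hptw : ∀ s ∈ Ioi (0:ℝ), ENNReal.ofReal (s ^ (P/p - 1) * g s ^ P)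
        ≤ A ^ (P/p - 1) * ENNReal.ofReal (g s ^ p) := by
      intro s hs
      have hs0 : (0:ℝ) < s := hs
      by_cases hgs0 : g s = 0
      · simp [hgs0, Real.zero_rpow (ne_of_gt hP0)]
      have hgs : 0 < g s := lt_of_le_of_ne (hgpos s hs0) (Ne.symm hgs0)
      have hre : s ^ (P/p - 1) * g s ^ P = (s * g s ^ p) ^ (P/p - 1) * g s ^ p := by
        have h1 : (g s ^ p) ^ (P/p - 1) = g s ^ (P - p) := by
          rw [← Real.rpow_mul hgs.le]
          congr 1
          field_simp
        have h2 : g s ^ P = g s ^ (P - p) * g s ^ p := by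
          rw [← Real.rpow_add hgs, sub_add_cancel]
        rw [Real.mul_rpow hs0.le (Real.rpow_nonneg hgs.le _), h1, h2]
        ring
      rw [hre, ENNReal.ofReal_mul (Real.rpow_nonneg (by positivity) _),
        ← ENNReal.ofReal_rpow_of_pos (by positivity),
        ENNReal.ofReal_mul hs0.le]
      exact mul_le_mul_left (ENNReal.rpow_le_rpow (hL1 s hs0) hppe) _
    calc S ≤ ∫⁻ s in Ioi (0:ℝ), A ^ (P/p - 1) * ENNReal.ofReal (g s ^ p) :=
          setLIntegral_mono (measurable_const.mul hgpm) hptw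
      _ = A ^ (P/p - 1) * A := by rw [lintegral_const_mul _ hgpm]
      _ = A ^ (P/p - 1) * A ^ (1:ℝ) := by rw [ENNReal.rpow_one]
      _ = A ^ (P/p - 1 + 1) := (ENNReal.rpow_add _ _ hA0 hAtop).symm
      _ = A ^ (P/p) := by ring_nf
  have hwm : Measurable fun t : ℝ => ENNReal.ofReal (t ^ (-β)) := by fun_prop
  have hXm : Measurable fun t : ℝ => ENNReal.ofReal (t * g t ^ q) :=
    (measurable_id.mul (hg.pow measurable_const)).ennreal_ofReal
  have hYanti : Antitone fun t : ℝ => ∫⁻ s in Ioi t, ENNReal.ofReal (g s ^ q) :=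
    fun t1 t2 h => lintegral_mono_set (Ioi_subset_Ioi h)
  have hYm : Measurable fun t : ℝ => ∫⁻ s in Ioi t, ENNReal.ofReal (g s ^ q) :=
    hYanti.measurable
  have hT1 : (∫⁻ t in Ioi (0:ℝ),
      ENNReal.ofReal (t ^ (-β)) * ENNReal.ofReal (t * g t ^ q) ^ (P/q)) = S := by
    refine setLIntegral_congr_fun measurableSet_Ioi (fun t ht => ?_)
    have ht0 : (0:ℝ) < t := ht
    by_cases hgt : g t = 0
    · simp [hgt, Real.zero_rpow hq0.ne', Real.zero_rpow (ne_of_gt hP0),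
        ENNReal.zero_rpow_of_pos hr0]
    have hgt0 : 0 < g t := lt_of_le_of_ne (hgpos t ht0) (Ne.symm hgt)
    have hb : 0 < t * g t ^ q := by positivity
    rw [ENNReal.ofReal_rpow_of_pos hb,
      ← ENNReal.ofReal_mul (Real.rpow_nonneg ht0.le _)]
    congr 1
    rw [Real.mul_rpow ht0.le (Real.rpow_nonneg hgt0.le _), ← Real.rpow_mul hgt0.le,
      show q * (P/q) = P by field_simp, ← mul_assoc, ← Real.rpow_add ht0,
      show -β + P/q = P/p - 1 by linarith [hkey]]
  have hT2' : (∫⁻ t in Ioi (0:ℝ), ENNReal.ofReal (t ^ (-β)) *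
        (∫⁻ s in Ioi t, ENNReal.ofReal (g s ^ q)) ^ (P/q))
      ≤ ENNReal.ofReal c * S := by
    refine le_trans (hT2 _ hgqm) (mul_le_mul_right (le_of_eq ?_) _)
    refine setLIntegral_congr_fun measurableSet_Ioi (fun s hs => ?_)
    have hs0 : (0:ℝ) < s := hs
    by_cases hgs : g s = 0
    · simp [hgs, Real.zero_rpow hq0.ne', Real.zero_rpow (ne_of_gt hP0),
        ENNReal.zero_rpow_of_pos hr0]
    have hgs0 : 0 < g s := lt_of_le_of_ne (hgpos s hs0) (Ne.symm hgs)
    rw [ENNReal.ofReal_rpow_of_pos (Real.rpow_pos_of_pos hgs0 _),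
      ← ENNReal.ofReal_mul (Real.rpow_nonneg hs0.le _)]
    congr 1
    rw [← Real.rpow_mul hgs0.le, show q * (P/q) = P by field_simp, hkey]
  have hXr : Measurable fun t : ℝ =>
      ENNReal.ofReal (t ^ (-β)) * ENNReal.ofReal (t * g t ^ q) ^ (P/q) :=
    hwm.mul (hXm.pow_const _)
  have hYr : Measurable fun t : ℝ => ENNReal.ofReal (t ^ (-β)) *
      (∫⁻ s in Ioi t, ENNReal.ofReal (g s ^ q)) ^ (P/q) :=
    hwm.mul (hYm.pow_const _)
  have hmain : (∫⁻ t in Ioi (0:ℝ), ENNReal.ofReal (t ^ (-β)) *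
        (ENNReal.ofReal (t * g t ^ q) +
          ∫⁻ s in Ioi t, ENNReal.ofReal (g s ^ q)) ^ (P/q))
      ≤ 2 ^ (P/q - 1) * (1 + ENNReal.ofReal c) * A ^ (P/p) := by
    calc ∫⁻ t in Ioi (0:ℝ), ENNReal.ofReal (t ^ (-β)) *
          (ENNReal.ofReal (t * g t ^ q) +
            ∫⁻ s in Ioi t, ENNReal.ofReal (g s ^ q)) ^ (P/q)
        ≤ ∫⁻ t in Ioi (0:ℝ), 2 ^ (P/q - 1) *
            (ENNReal.ofReal (t ^ (-β)) * ENNReal.ofReal (t * g t ^ q) ^ (P/q) +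
              ENNReal.ofReal (t ^ (-β)) *
                (∫⁻ s in Ioi t, ENNReal.ofReal (g s ^ q)) ^ (P/q)) := by
          refine setLIntegral_mono (measurable_const.mul (hXr.add hYr)) fun t ht => ?_
          calc ENNReal.ofReal (t ^ (-β)) *
                (ENNReal.ofReal (t * g t ^ q) +
                  ∫⁻ s in Ioi t, ENNReal.ofReal (g s ^ q)) ^ (P/q)
              ≤ ENNReal.ofReal (t ^ (-β)) * ((2:ℝ≥0∞) ^ (P/q - 1) *
                  (ENNReal.ofReal (t * g t ^ q) ^ (P/q) +
                    (∫⁻ s in Ioi t, ENNReal.ofReal (g s ^ q)) ^ (P/q))) :=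
                mul_le_mul_right (ENNReal.rpow_add_le_mul_rpow_add_rpow _ _ hr1) _
            _ = 2 ^ (P/q - 1) *
                (ENNReal.ofReal (t ^ (-β)) * ENNReal.ofReal (t * g t ^ q) ^ (P/q) +
                  ENNReal.ofReal (t ^ (-β)) *
                    (∫⁻ s in Ioi t, ENNReal.ofReal (g s ^ q)) ^ (P/q)) := by ring
      _ = 2 ^ (P/q - 1) *
          ((∫⁻ t in Ioi (0:ℝ),
              ENNReal.ofReal (t ^ (-β)) * ENNReal.ofReal (t * g t ^ q) ^ (P/q)) +
            ∫⁻ t in Ioi (0:ℝ), ENNReal.ofReal (t ^ (-β)) *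
              (∫⁻ s in Ioi t, ENNReal.ofReal (g s ^ q)) ^ (P/q)) := by
          rw [lintegral_const_mul (f := fun t : ℝ =>
              ENNReal.ofReal (t ^ (-β)) * ENNReal.ofReal (t * g t ^ q) ^ (P/q) +
                ENNReal.ofReal (t ^ (-β)) *
                  (∫⁻ s in Ioi t, ENNReal.ofReal (g s ^ q)) ^ (P/q)) _ (hXr.add hYr), lintegral_add_left hXr]
      _ ≤ 2 ^ (P/q - 1) * (S + ENNReal.ofReal c * S) :=
          mul_le_mul_right (add_le_add (le_of_eq hT1) hT2') _
      _ = 2 ^ (P/q - 1) * (1 + ENNReal.ofReal c) * S := by ring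
      _ ≤ 2 ^ (P/q - 1) * (1 + ENNReal.ofReal c) * A ^ (P/p) := mul_le_mul_right hS _
  calc (∫⁻ t in Ioi (0:ℝ), ENNReal.ofReal (t ^ (-β)) *
        (ENNReal.ofReal (t * g t ^ q) +
          ∫⁻ s in Ioi t, ENNReal.ofReal (g s ^ q)) ^ (P/q)) ^ (1/P)
      ≤ (2 ^ (P/q - 1) * (1 + ENNReal.ofReal c) * A ^ (P/p)) ^ (1/P) :=
        ENNReal.rpow_le_rpow hmain (by positivity)
    _ = M * A ^ ((1:ℝ)/p) := by
        rw [ENNReal.mul_rpow_of_nonneg _ _ (by positivity : (0:ℝ) ≤ 1/P), hMdef,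
          ← ENNReal.rpow_mul]
        congr 1
        rw [show P/p * (1/P) = 1/p by field_simp]
    _ ≤ ENNReal.ofReal (M.toReal + 1) * A ^ ((1:ℝ)/p) := mul_le_mul_left hCM _
end

section
/- Let 0 < p ≤ q < ∞ and let g : (0,∞) → [0,∞) be a nonincreasing measurable function. Then ( ∫_0^∞ t^{q/p − 1} g(t)^q dt )^{1/q} ≤ ( ∫_0^∞ g(t)^p dt )^{1/p}. -/
open MeasureTheory Set
open scoped ENNReal

/-- For `0 < p ≤ q < ∞` and a nonincreasing `g : (0,∞) → [0,∞)`,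
`(∫₀^∞ t^{q/p-1} g(t)^q dt)^{1/q} ≤ (∫₀^∞ g(t)^p dt)^{1/p}`. -/
theorem lorentz_monotone_embedding
    (p q : ℝ) (hp : 0 < p) (hpq : p ≤ q) (g : ℝ → ℝ)
    (hg : Measurable g) (hg0 : ∀ t, 0 < t → 0 ≤ g t)
    (hmono : ∀ s t, 0 < s → s ≤ t → g t ≤ g s) :
    (∫⁻ t in Ioi (0 : ℝ), ENNReal.ofReal (t ^ (q / p - 1) * g t ^ q)) ^ (1 / q)
      ≤ (∫⁻ t in Ioi (0 : ℝ), ENNReal.ofReal (g t ^ p)) ^ (1 / p) := by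
  have hq : 0 < q := hp.trans_le hpq
  have hr1 : (0:ℝ) ≤ q / p - 1 := by
    rw [sub_nonneg, le_div_iff₀ hp, one_mul]; exact hpq
  set I := ∫⁻ t in Ioi (0:ℝ), ENNReal.ofReal (g t ^ p) with hIdef
  have hmeas : Measurable fun s => ENNReal.ofReal (g s ^ p) :=
    (hg.pow measurable_const).ennreal_ofReal
  have key : ∀ t, 0 < t → ENNReal.ofReal t * ENNReal.ofReal (g t ^ p) ≤ I := by
    intro t ht
    have h1 : ENNReal.ofReal t * ENNReal.ofReal (g t ^ p)
        = ∫⁻ _ in Ioc (0:ℝ) t, ENNReal.ofReal (g t ^ p) := by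
      rw [setLIntegral_const, Real.volume_Ioc, sub_zero, mul_comm]
    rw [h1]
    refine le_trans (setLIntegral_mono hmeas ?_) (lintegral_mono_set Ioc_subset_Ioi_self)
    intro s hs
    exact ENNReal.ofReal_le_ofReal
      (Real.rpow_le_rpow (hg0 t ht) (hmono s t hs.1 hs.2) hp.le)
  by_cases hItop : I = ⊤
  · rw [hItop, ENNReal.top_rpow_of_pos (by positivity : (0:ℝ) < 1/p)]
    exact le_top
  by_cases hI0 : I = 0
  · have hg00 : ∀ t, 0 < t → g t = 0 := by
      intro t ht
      have h := key t ht
      rw [hI0, le_zero_iff, mul_eq_zero] at h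
      rcases h with h | h
      · rw [ENNReal.ofReal_eq_zero] at h; linarith
      · have h1 : g t ^ p ≤ 0 := by simpa [ENNReal.ofReal_eq_zero] using h
        have h2 : g t ^ p = 0 := le_antisymm h1 (Real.rpow_nonneg (hg0 t ht) p)
        exact (Real.rpow_eq_zero (hg0 t ht) hp.ne').mp h2
    have hz : ∫⁻ t in Ioi (0:ℝ), ENNReal.ofReal (t ^ (q / p - 1) * g t ^ q)
        = ∫⁻ _ in Ioi (0:ℝ), (0:ℝ≥0∞) :=
      setLIntegral_congr_fun measurableSet_Ioi
        (fun t ht => by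
          simp [hg00 t ht, Real.zero_rpow hq.ne'])
    rw [hz, lintegral_zero] at *
    rw [hz, ENNReal.zero_rpow_of_pos (by positivity : (0:ℝ) < 1/q)]
    exact zero_le
  · have pt : ∀ t ∈ Ioi (0:ℝ), ENNReal.ofReal (t ^ (q / p - 1) * g t ^ q)
        ≤ I ^ (q / p - 1) * ENNReal.ofReal (g t ^ p) := by
      intro t ht
      have ht0 : (0:ℝ) < t := ht
      have hgt0 : 0 ≤ g t := hg0 t ht0
      have e1 : p * (q / p - 1) + p = q := by field_simp; ring
      have heq : t ^ (q / p - 1) * g t ^ q = (t * g t ^ p) ^ (q / p - 1) * g t ^ p := by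
        calc t ^ (q / p - 1) * g t ^ q
            = t ^ (q / p - 1) * (g t ^ (p * (q / p - 1)) * g t ^ p) := by
              rw [← Real.rpow_add' hgt0 (by rw [e1]; exact hq.ne'), e1]
          _ = (t * g t ^ p) ^ (q / p - 1) * g t ^ p := by
              rw [Real.mul_rpow ht0.le (Real.rpow_nonneg hgt0 p), Real.rpow_mul hgt0]
              ring
      rw [heq, ENNReal.ofReal_mul (by positivity : (0:ℝ) ≤ (t * g t ^ p) ^ (q / p - 1))]
      refine mul_le_mul_left ?_ _
      rw [← ENNReal.ofReal_rpow_of_nonneg (by positivity) hr1,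
        ENNReal.ofReal_mul ht0.le]
      exact ENNReal.rpow_le_rpow (key t ht0) hr1
    calc (∫⁻ t in Ioi (0:ℝ), ENNReal.ofReal (t ^ (q / p - 1) * g t ^ q)) ^ (1/q)
        ≤ (∫⁻ t in Ioi (0:ℝ), I ^ (q / p - 1) * ENNReal.ofReal (g t ^ p)) ^ (1/q) := by
          exact ENNReal.rpow_le_rpow (setLIntegral_mono (hmeas.const_mul _) pt)
            (by positivity)
      _ = (I ^ (q / p - 1) * I) ^ (1/q) := by rw [lintegral_const_mul _ hmeas]
      _ = (I ^ (q / p)) ^ (1/q) := by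
          congr 1
          nth_rewrite 2 [← ENNReal.rpow_one I]
          rw [← ENNReal.rpow_add _ _ hI0 hItop]
          norm_num
      _ = I ^ (1/p) := by
          rw [← ENNReal.rpow_mul]
          congr 1
          field_simp
end

section
/- Let (X,d) be a metric space and let μ be a Borel measure on X such that μ(B(x,ρ)) ≤ C_Q ρ^Q for every x ∈ X and every ρ > 0, where Q > 0 and C_Q ≥ 1. Let γ ∈ [0,∞) and c > 0. Then there exists a constant C > 0, depending only on Q, γ, c and C_Q, such that for every x ∈ X and every t > 0, ∫_X d(x,y)^γ · exp( −d(x,y)^2/(c t) ) dμ(y) ≤ C t^{(Q+γ)/2}. -/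
open MeasureTheory Metric
open scoped ENNReal

lemma aux_summable_s11 (p : ℝ) :
    Summable (fun n : ℕ => ((n : ℝ) + 1) ^ p * Real.exp (-(n : ℝ) ^ 2)) := by
  set k := ⌈p⌉₊ with hk
  have hg : Summable (fun n : ℕ => (n : ℝ) ^ k * Real.exp (-1 * n)) :=
    Real.summable_pow_mul_exp_neg_nat_mul k one_pos
  have hg1 : Summable (fun n : ℕ => ((n : ℝ) + 1) ^ k * Real.exp (-((n : ℝ) + 1))) := by
    have := (summable_nat_add_iff 1).mpr hg
    simpa [neg_one_mul] using this
  refine Summable.of_nonneg_of_le (fun n => by positivity) (fun n => ?_)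
    (hg1.mul_left (Real.exp 1))
  have h1 : ((n : ℝ) + 1) ^ p ≤ ((n : ℝ) + 1) ^ k := by
    rw [← Real.rpow_natCast ((n : ℝ) + 1) k]
    have : (0:ℝ) ≤ n := Nat.cast_nonneg n
    exact Real.rpow_le_rpow_of_exponent_le (by linarith) (Nat.le_ceil p)
  have h2 : Real.exp (-(n : ℝ) ^ 2) ≤ Real.exp 1 * Real.exp (-((n : ℝ) + 1)) := by
    rw [← Real.exp_add]
    apply Real.exp_le_exp.mpr
    have h : n ≤ n ^ 2 := Nat.le_self_pow two_ne_zero n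
    have h' : (n : ℝ) ≤ (n : ℝ) ^ 2 := by exact_mod_cast h
    linarith
  calc ((n : ℝ) + 1) ^ p * Real.exp (-(n : ℝ) ^ 2)
      ≤ ((n : ℝ) + 1) ^ k * (Real.exp 1 * Real.exp (-((n : ℝ) + 1))) :=
        mul_le_mul h1 h2 (by positivity) (by positivity)
    _ = Real.exp 1 * (((n : ℝ) + 1) ^ k * Real.exp (-((n : ℝ) + 1))) := by ring

/-- Gaussian-weighted integral estimate: if `μ(B(x,ρ)) ≤ C_Q ρ^Q` for all `ρ > 0`, then
`∫_X d(x,y)^γ exp(-d(x,y)²/(ct)) dμ(y) ≤ C t^{(Q+γ)/2}`. -/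
theorem gaussian_weighted_integral_bound
    {X : Type*} [MetricSpace X] [MeasurableSpace X] [BorelSpace X]
    (μ : Measure X) (Q C_Q γ c : ℝ)
    (hQ : 0 < Q) (hCQ : 1 ≤ C_Q)
    (hreg : ∀ (x : X) (ρ : ℝ), 0 < ρ → μ (ball x ρ) ≤ ENNReal.ofReal (C_Q * ρ ^ Q))
    (hγ : 0 ≤ γ) (hc : 0 < c) :
    ∃ C > (0 : ℝ), ∀ (x : X) (t : ℝ), 0 < t →
      ∫⁻ y, ENNReal.ofReal (dist x y ^ γ * Real.exp (-(dist x y) ^ 2 / (c * t))) ∂μ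
        ≤ ENNReal.ofReal (C * t ^ ((Q + γ) / 2)) := by
  set p := Q + γ with hpdef
  have hp0 : 0 < p := add_pos_of_pos_of_nonneg hQ hγ
  have hsum := aux_summable_s11 p
  set S := ∑' n : ℕ, ((n : ℝ) + 1) ^ p * Real.exp (-(n : ℝ) ^ 2) with hSdef
  have hS1 : (1 : ℝ) ≤ S := by
    have h0 : (((0 : ℕ) : ℝ) + 1) ^ p * Real.exp (-((0 : ℕ) : ℝ) ^ 2) = 1 := by
      simp
    have := Summable.le_tsum hsum 0 (fun n _ => by positivity)
    rw [h0] at this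
    exact this
  have hcp : (0 : ℝ) < c ^ (p / 2) := Real.rpow_pos_of_pos hc _
  have hCpos : (0 : ℝ) < C_Q * c ^ (p / 2) * S :=
    mul_pos (mul_pos (by linarith) hcp) (by linarith)
  refine ⟨C_Q * c ^ (p / 2) * S, hCpos, ?_⟩
  intro x t ht
  have hct : (0 : ℝ) < c * t := mul_pos hc ht
  set r := Real.sqrt (c * t) with hrdef
  have hr : 0 < r := Real.sqrt_pos.mpr hct
  have hr2 : r ^ 2 = c * t := Real.sq_sqrt hct.le
  set A : ℕ → Set X := fun n => ball x (((n : ℝ) + 1) * r) \ ball x ((n : ℝ) * r) with hAdef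
  have hAm : ∀ n, MeasurableSet (A n) := fun n =>
    measurableSet_ball.diff measurableSet_ball
  have hAd : Pairwise (Function.onFun Disjoint A) := by
    apply (pairwise_disjoint_on A).2
    intro m n hmn
    refine Set.disjoint_left.2 fun y hym hyn => ?_
    have h1 : dist y x < ((m : ℝ) + 1) * r := hym.1
    have h2 : ((m : ℝ) + 1) ≤ (n : ℝ) := by exact_mod_cast Nat.succ_le_of_lt hmn
    exact hyn.2 (mem_ball.2 (h1.trans_le (by nlinarith)))
  have hAu : (⋃ n, A n) = Set.univ := by
    ext y
    simp only [Set.mem_iUnion, Set.mem_univ, iff_true]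
    refine ⟨⌊dist y x / r⌋₊, mem_ball.2 ?_, fun h => ?_⟩
    · have := Nat.lt_floor_add_one (dist y x / r)
      calc dist y x = dist y x / r * r := by field_simp
        _ < ((⌊dist y x / r⌋₊ : ℝ) + 1) * r := by
            exact mul_lt_mul_of_pos_right this hr
    · have h1 : dist y x < (⌊dist y x / r⌋₊ : ℝ) * r := mem_ball.1 h
      have h2 : (⌊dist y x / r⌋₊ : ℝ) ≤ dist y x / r :=
        Nat.floor_le (by positivity)
      have := (le_div_iff₀ hr).1 h2
      linarith
  rw [← setLIntegral_univ, ← hAu,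
    lintegral_iUnion hAm hAd]
  set K := C_Q * (c * t) ^ (p / 2) with hKdef
  have hann : ∀ n : ℕ,
      (∫⁻ y in A n, ENNReal.ofReal
        (dist x y ^ γ * Real.exp (-(dist x y) ^ 2 / (c * t))) ∂μ)
        ≤ ENNReal.ofReal (K * (((n : ℝ) + 1) ^ p * Real.exp (-(n : ℝ) ^ 2))) := by
    intro n
    set B : ℝ := (((n : ℝ) + 1) * r) ^ γ * Real.exp (-(n : ℝ) ^ 2) with hBdef
    have hptw : ∀ y ∈ A n,
        ENNReal.ofReal (dist x y ^ γ * Real.exp (-(dist x y) ^ 2 / (c * t)))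
          ≤ ENNReal.ofReal B := by
      intro y hy
      apply ENNReal.ofReal_le_ofReal
      have hd1 : dist x y < ((n : ℝ) + 1) * r := by
        rw [dist_comm]; exact mem_ball.1 hy.1
      have hd2 : (n : ℝ) * r ≤ dist x y := by
        rw [dist_comm]
        by_contra hcon
        exact hy.2 (mem_ball.2 (lt_of_not_ge hcon))
      have e1 : dist x y ^ γ ≤ (((n : ℝ) + 1) * r) ^ γ :=
        Real.rpow_le_rpow dist_nonneg hd1.le hγ
      have e2 : Real.exp (-(dist x y) ^ 2 / (c * t)) ≤ Real.exp (-(n : ℝ) ^ 2) := by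
        apply Real.exp_le_exp.mpr
        rw [div_le_iff₀ hct]
        have hsq : ((n : ℝ) * r) ^ 2 ≤ dist x y ^ 2 := by
          apply pow_le_pow_left₀ (by positivity) hd2
        have : ((n : ℝ) * r) ^ 2 = (n : ℝ) ^ 2 * (c * t) := by
          rw [mul_pow, hr2]
        nlinarith
      exact mul_le_mul e1 e2 (Real.exp_pos _).le (by positivity)
    have step2 : (∫⁻ y in A n, ENNReal.ofReal
        (dist x y ^ γ * Real.exp (-(dist x y) ^ 2 / (c * t))) ∂μ)
        ≤ ENNReal.ofReal B * μ (A n) := by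
      calc (∫⁻ y in A n, ENNReal.ofReal
          (dist x y ^ γ * Real.exp (-(dist x y) ^ 2 / (c * t))) ∂μ)
          ≤ ∫⁻ _ in A n, ENNReal.ofReal B ∂μ :=
            setLIntegral_mono measurable_const hptw
        _ = ENNReal.ofReal B * μ (A n) := setLIntegral_const _ _
    have step3 : μ (A n) ≤ ENNReal.ofReal (C_Q * (((n : ℝ) + 1) * r) ^ Q) := by
      refine (measure_mono Set.diff_subset).trans ?_
      exact hreg x _ (by positivity)
    calc (∫⁻ y in A n, ENNReal.ofReal
        (dist x y ^ γ * Real.exp (-(dist x y) ^ 2 / (c * t))) ∂μ)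
        ≤ ENNReal.ofReal B * ENNReal.ofReal (C_Q * (((n : ℝ) + 1) * r) ^ Q) :=
          step2.trans (mul_le_mul_right step3 _)
      _ = ENNReal.ofReal (B * (C_Q * (((n : ℝ) + 1) * r) ^ Q)) :=
          (ENNReal.ofReal_mul (by positivity)).symm
      _ = ENNReal.ofReal (K * (((n : ℝ) + 1) ^ p * Real.exp (-(n : ℝ) ^ 2))) := by
          congr 1
          have hb : (0 : ℝ) ≤ ((n : ℝ) + 1) * r := by positivity
          have e1 : (((n : ℝ) + 1) * r) ^ γ * (((n : ℝ) + 1) * r) ^ Q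
              = (((n : ℝ) + 1) * r) ^ p := by
            rw [← Real.rpow_add (by positivity), hpdef, add_comm γ Q]
          have e2 : (((n : ℝ) + 1) * r) ^ p = ((n : ℝ) + 1) ^ p * r ^ p :=
            Real.mul_rpow (by positivity) hr.le
          have e3 : r ^ p = (c * t) ^ (p / 2) := by
            rw [hrdef, Real.sqrt_eq_rpow, ← Real.rpow_mul hct.le]
            congr 1
            ring
          calc B * (C_Q * (((n : ℝ) + 1) * r) ^ Q)
              = (((n : ℝ) + 1) * r) ^ γ * (((n : ℝ) + 1) * r) ^ Q
                * Real.exp (-(n : ℝ) ^ 2) * C_Q := by rw [hBdef]; ring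
            _ = ((n : ℝ) + 1) ^ p * (c * t) ^ (p / 2)
                * Real.exp (-(n : ℝ) ^ 2) * C_Q := by rw [e1, e2, e3]
            _ = K * (((n : ℝ) + 1) ^ p * Real.exp (-(n : ℝ) ^ 2)) := by
                rw [hKdef]; ring
  calc (∑' n, ∫⁻ y in A n, ENNReal.ofReal
      (dist x y ^ γ * Real.exp (-(dist x y) ^ 2 / (c * t))) ∂μ)
      ≤ ∑' n : ℕ, ENNReal.ofReal
          (K * (((n : ℝ) + 1) ^ p * Real.exp (-(n : ℝ) ^ 2))) :=
        ENNReal.tsum_le_tsum hann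
    _ = ENNReal.ofReal (∑' n : ℕ,
          K * (((n : ℝ) + 1) ^ p * Real.exp (-(n : ℝ) ^ 2))) := by
        rw [ENNReal.ofReal_tsum_of_nonneg (fun n => by positivity) (hsum.mul_left K)]
    _ = ENNReal.ofReal (K * S) := by rw [tsum_mul_left]
    _ ≤ ENNReal.ofReal (C_Q * c ^ (p / 2) * S * t ^ (p / 2)) := by
        apply ENNReal.ofReal_le_ofReal
        rw [hKdef, Real.mul_rpow hc.le ht.le]
        ring_nf
        exact le_refl _
end
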